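/- Let n ≥ 1 and let Y ∈ Ψ([n+1]) be a Ψ-tree with exactly ℓ left-most nodes and exactly r right-most nodes. Then the full subposet Π_n^{-1}(Y) = {T̂ ∈ Φ(underline-n) : Π_n(T̂) = Y} of Φ(underline-n) is isomorphic as a poset to X_{ℓ,r}. (Lemma 3.2 of the paper.) -/

import Mathlib

/-- The three letters `a`, `b`, `(ab)` used to form the words of the poset `X_{ℓ,r}`. -/
inductive XLetter : Type
  | A : XLetter
  | B : XLetter
  | AB : XLetter
deriving DecidableEq

/-- Number of occurrences of the letter `a` contributed by a letter. -/
def XLetter.ca : XLetter → ℕ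
  | .A => 1
  | .B => 0
  | .AB => 1

/-- Number of occurrences of the letter `b` contributed by a letter. -/
def XLetter.cb : XLetter → ℕ
  | .A => 0
  | .B => 1
  | .AB => 1

/-- One step of the order relation on words: `XStep x y` holds iff `x` is obtained from `y`
by replacing one adjacent pair `ab` or `ba` by the single letter `(ab)`. -/
def XStep (x y : List XLetter) : Prop :=
  ∃ u v : List XLetter, x = u ++ [XLetter.AB] ++ v ∧
    (y = u ++ [XLetter.A, XLetter.B] ++ v ∨ y = u ++ [XLetter.B, XLetter.A] ++ v)

/-- The underlying set of the poset `X_{ℓ,r}`: words in the letters `a`, `b`, `(ab)` with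
exactly `l` occurrences of `a` and `r` occurrences of `b`. -/
def XWord (l r : ℕ) : Type :=
  {w : List XLetter // (w.map XLetter.ca).sum = l ∧ (w.map XLetter.cb).sum = r}

theorem XStep.length_lt {x y : List XLetter} (h : XStep x y) : x.length < y.length := by
  obtain ⟨u, v, rfl, (rfl | rfl)⟩ := h <;> simp [List.length_append]

theorem xword_le_length {x y : List XLetter} (h : Relation.ReflTransGen XStep x y) :
    x.length ≤ y.length := by
  induction h with
  | refl => exact le_rfl
  | tail _ h ih => exact ih.trans h.length_lt.le

/-- The partial order on `X_{ℓ,r}`, generated by the replacement steps. -/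
instance (l r : ℕ) : PartialOrder (XWord l r) where
  le x y := Relation.ReflTransGen XStep x.1 y.1
  le_refl _ := Relation.ReflTransGen.refl
  le_trans _ _ _ h h' := Relation.ReflTransGen.trans h h'
  le_antisymm x y h h' := by
    rcases Relation.ReflTransGen.cases_head h with heq | ⟨z, hxz, hzy⟩
    · exact Subtype.ext heq
    · exact absurd ((xword_le_length h').trans_lt
        (hxz.length_lt.trans_le (xword_le_length hzy))) (lt_irrefl _)

/-! ### Ψ-trees, encoded by systems of compatible brackets (partial parenthesizations) -/

/-- A bracket for `Ψ([n])`: an interval `{i, …, j}` of leaves with `i < j ≤ n`,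
different from the full interval `{0, …, n}`.  Brackets correspond to internal
vertices (other than the root) of a `Ψ`-tree with leaves `0, 1, …, n`. -/
abbrev PsiBracket (n : ℕ) : Type :=
  {p : ℕ × ℕ // p.1 < p.2 ∧ p.2 ≤ n ∧ ¬(p.1 = 0 ∧ p.2 = n)}

/-- The set of leaves grouped by a `Ψ`-bracket. -/
def PsiBracket.leaves {n : ℕ} (b : PsiBracket n) : Set ℕ := Set.Icc b.1.1 b.1.2

/-- Two `Ψ`-brackets are compatible when their leaf sets are disjoint or nested. -/
def PsiCompat {n : ℕ} (b c : PsiBracket n) : Prop :=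
  Disjoint b.leaves c.leaves ∨ b.leaves ⊆ c.leaves ∨ c.leaves ⊆ b.leaves

/-- The poset `Ψ([n])` of `Ψ`-trees with leaves `0, 1, …, n`, encoded as systems of
pairwise compatible brackets; `T ≤ T'` (i.e. `T' ≥ T`, `T` is obtained from `T'` by
contracting internal edges) iff the bracket system of `T` is contained in that of `T'`. -/
abbrev Psi (n : ℕ) : Type :=
  {S : Finset (PsiBracket n) // ∀ b ∈ S, ∀ c ∈ S, PsiCompat b c}


/-! ### Fans, encoded by systems of compatible brackets -/

/-- A non-trunk bracket of a fan with leaves `{* = 0, 1, …, n}`: an interval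
`{i, …, j}` of leaves with `1 ≤ i < j ≤ n` (not containing the distinguished leaf `*`).
These correspond to internal vertices not lying on the trunk. -/
abbrev FanIntl (n : ℕ) : Type :=
  {p : ℕ × ℕ // 1 ≤ p.1 ∧ p.1 < p.2 ∧ p.2 ≤ n}

/-- A trunk bracket of a fan with leaves `{* = 0, 1, …, n}`: a pair `(a, b)` with
`0 ≤ a < b ≤ n + 1`, not `(0, n+1)`, grouping the leaves `{*} ∪ {1, …, a} ∪ {b, …, n}`
(the leaves `1, …, a` lying on one side of the trunk and `b, …, n` on the other).
These correspond to internal vertices lying on the trunk (other than the root). -/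
abbrev FanTrunk (n : ℕ) : Type :=
  {p : ℕ × ℕ // p.1 < p.2 ∧ p.2 ≤ n + 1 ∧ ¬(p.1 = 0 ∧ p.2 = n + 1)}

/-- A bracket of a fan: either a non-trunk bracket or a trunk bracket. -/
abbrev FanBracket (n : ℕ) : Type := FanIntl n ⊕ FanTrunk n

/-- The set of leaves grouped by a bracket of a fan (the distinguished leaf `*` is `0`). -/
def FanBracket.leaves {n : ℕ} : FanBracket n → Set ℕ
  | .inl b => Set.Icc b.1.1 b.1.2
  | .inr p => {0} ∪ Set.Icc 1 p.1.1 ∪ Set.Icc p.1.2 n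

/-- Compatibility of two brackets of a fan: two non-trunk brackets must have disjoint or
nested leaf sets; two trunk brackets must be nested as trunk brackets (each side of the
trunk separately); a non-trunk bracket `{i, …, j}` and a trunk bracket `(a, b)` must be
either disjoint (`a < i` and `j < b`) or nested on a single side of the trunk (`j ≤ a`,
or `b ≤ i`). -/
def FanCompat {n : ℕ} : FanBracket n → FanBracket n → Prop
  | .inr p, .inr q => (p.1.1 ≤ q.1.1 ∧ q.1.2 ≤ p.1.2) ∨ (q.1.1 ≤ p.1.1 ∧ p.1.2 ≤ q.1.2)
  | .inl b, .inr p => b.1.2 ≤ p.1.1 ∨ p.1.2 ≤ b.1.1 ∨ (p.1.1 < b.1.1 ∧ b.1.2 < p.1.2)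
  | .inr p, .inl b => b.1.2 ≤ p.1.1 ∨ p.1.2 ≤ b.1.1 ∨ (p.1.1 < b.1.1 ∧ b.1.2 < p.1.2)
  | .inl b, .inl c =>
      Disjoint (FanBracket.leaves (.inl b)) (FanBracket.leaves (.inl c)) ∨
      FanBracket.leaves (.inl b) ⊆ FanBracket.leaves (.inl c) ∨
      FanBracket.leaves (.inl c) ⊆ FanBracket.leaves (.inl b)

/-- The poset `Φ(underline-n)` of fans with leaves `{* = 0, 1, …, n}`, encoded as systems
of pairwise compatible brackets; `T̂ ≤ T̂'` iff `T̂` is obtained from `T̂'` by contracting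
non-leaf edges, iff the bracket system of `T̂` is contained in that of `T̂'`. -/
abbrev Fan (n : ℕ) : Type :=
  {S : Finset (FanBracket n) // ∀ x ∈ S, ∀ y ∈ S, FanCompat x y}

/-! ### The cutting map `Π_n` -/

/-- The brackets of `Π_n(T̂)` produced by a single bracket of the fan `T̂`: a non-trunk
bracket is kept unchanged, while a trunk bracket `(a, b)` produces the left-most bracket
`{0, …, a}` (when `a ≥ 1`) and the right-most bracket `{b, …, n+1}` (when `b ≤ n`);
here the distinguished leaf `*` of the fan has been split into the leaves `0` and `n+1`. -/
def cutBracket {n : ℕ} : FanBracket n → Finset (PsiBracket (n + 1))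
  | .inl b => {⟨b.1, by obtain ⟨h1, h2, h3⟩ := b.2; omega⟩}
  | .inr p =>
      (if h : 1 ≤ p.1.1 then {⟨(0, p.1.1), by obtain ⟨h1, h2, h3⟩ := p.2; omega⟩} else ∅) ∪
      (if h : p.1.2 ≤ n then {⟨(p.1.2, n + 1), by obtain ⟨h1, h2, h3⟩ := p.2; omega⟩} else ∅)

/-- The cutting map on bracket systems. -/
def cutSet {n : ℕ} (S : Finset (FanBracket n)) : Finset (PsiBracket (n + 1)) :=
  S.biUnion cutBracket

theorem psiCompat_mk {m : ℕ} {p q : ℕ × ℕ}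
    (hp : p.1 < p.2 ∧ p.2 ≤ m ∧ ¬(p.1 = 0 ∧ p.2 = m))
    (hq : q.1 < q.2 ∧ q.2 ≤ m ∧ ¬(q.1 = 0 ∧ q.2 = m))
    (h : p.2 < q.1 ∨ q.2 < p.1 ∨ (q.1 ≤ p.1 ∧ p.2 ≤ q.2) ∨ (p.1 ≤ q.1 ∧ q.2 ≤ p.2)) :
    PsiCompat (⟨p, hp⟩ : PsiBracket m) ⟨q, hq⟩ := by
  unfold PsiCompat PsiBracket.leaves
  rcases h with h | h | h | h
  · refine Or.inl (Set.disjoint_left.mpr fun a ha hb => ?_)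
    simp only [Set.mem_Icc] at ha hb; omega
  · refine Or.inl (Set.disjoint_left.mpr fun a ha hb => ?_)
    simp only [Set.mem_Icc] at ha hb; omega
  · exact Or.inr (Or.inl (Set.Icc_subset_Icc h.1 h.2))
  · exact Or.inr (Or.inr (Set.Icc_subset_Icc h.1 h.2))

theorem cutSet_compat {n : ℕ} (S : Fan n) :
    ∀ b ∈ cutSet S.1, ∀ c ∈ cutSet S.1, PsiCompat b c := by
  intro b hb c hc
  simp only [cutSet, Finset.mem_biUnion] at hb hc
  obtain ⟨x, hxS, hbx⟩ := hb
  obtain ⟨y, hyS, hcy⟩ := hc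
  have hcompat := S.2 x hxS y hyS
  rcases x with bx | px <;> rcases y with by' | py
  · simp only [cutBracket, Finset.mem_singleton] at hbx hcy
    subst hbx; subst hcy
    simp only [FanCompat, FanBracket.leaves] at hcompat
    obtain ⟨h1, h2, h3⟩ := bx.2
    obtain ⟨h4, h5, h6⟩ := by'.2
    rcases hcompat with h | h | h
    · have key : bx.1.2 < by'.1.1 ∨ by'.1.2 < bx.1.1 := by
        by_contra hcon
        push_neg at hcon
        have hmem1 : max bx.1.1 by'.1.1 ∈ Set.Icc bx.1.1 bx.1.2 := by
          simp only [Set.mem_Icc]; omega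
        have hmem2 : max bx.1.1 by'.1.1 ∈ Set.Icc by'.1.1 by'.1.2 := by
          simp only [Set.mem_Icc]; omega
        exact Set.disjoint_left.mp h hmem1 hmem2
      exact psiCompat_mk _ _ (by omega)
    · rw [Set.Icc_subset_Icc_iff (by omega)] at h
      exact psiCompat_mk _ _ (by omega)
    · rw [Set.Icc_subset_Icc_iff (by omega)] at h
      exact psiCompat_mk _ _ (by omega)
  · simp only [cutBracket, Finset.mem_singleton] at hbx
    subst hbx
    simp only [cutBracket, Finset.mem_union] at hcy
    simp only [FanCompat] at hcompat
    obtain ⟨h1, h2, h3⟩ := bx.2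
    obtain ⟨h4, h5, h6⟩ := py.2
    rcases hcy with hcy | hcy <;> split_ifs at hcy with hif <;>
      first
        | exact absurd hcy (Finset.notMem_empty _)
        | (simp only [Finset.mem_singleton] at hcy; subst hcy;
           exact psiCompat_mk _ _ (by omega))
  · simp only [cutBracket, Finset.mem_singleton] at hcy
    subst hcy
    simp only [cutBracket, Finset.mem_union] at hbx
    simp only [FanCompat] at hcompat
    obtain ⟨h1, h2, h3⟩ := by'.2
    obtain ⟨h4, h5, h6⟩ := px.2
    rcases hbx with hbx | hbx <;> split_ifs at hbx with hif <;>
      first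
        | exact absurd hbx (Finset.notMem_empty _)
        | (simp only [Finset.mem_singleton] at hbx; subst hbx;
           exact psiCompat_mk _ _ (by omega))
  · simp only [cutBracket, Finset.mem_union] at hbx hcy
    simp only [FanCompat] at hcompat
    obtain ⟨h1, h2, h3⟩ := px.2
    obtain ⟨h4, h5, h6⟩ := py.2
    rcases hbx with hbx | hbx <;> rcases hcy with hcy | hcy <;>
        split_ifs at hbx hcy with hif1 hif2 <;>
      first
        | exact absurd hbx (Finset.notMem_empty _)
        | exact absurd hcy (Finset.notMem_empty _)
        | (simp only [Finset.mem_singleton] at hbx hcy; subst hbx; subst hcy;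
           exact psiCompat_mk _ _ (by omega))

/-- The cutting map (functor) `Π_n : Φ(underline-n) → Ψ([n+1])`. -/
def cutFan {n : ℕ} (S : Fan n) : Psi (n + 1) := ⟨cutSet S.1, cutSet_compat S⟩


namespace XPath

lemma ca_le (c : XLetter) : c.ca ≤ 1 := by cases c <;> simp [XLetter.ca]
lemma cb_le (c : XLetter) : c.cb ≤ 1 := by cases c <;> simp [XLetter.cb]
lemma ca_cb_pos (c : XLetter) : 1 ≤ c.ca + c.cb := by cases c <;> simp [XLetter.ca, XLetter.cb]

def tot (w : List XLetter) : ℕ × ℕ := ((w.map XLetter.ca).sum, (w.map XLetter.cb).sum)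

@[simp] lemma tot_nil : tot [] = (0, 0) := rfl

@[simp] lemma tot_cons (c : XLetter) (w : List XLetter) :
    tot (c :: w) = (c.ca + (tot w).1, c.cb + (tot w).2) := by simp [tot]

lemma tot_append (u v : List XLetter) :
    tot (u ++ v) = ((tot u).1 + (tot v).1, (tot u).2 + (tot v).2) := by simp [tot]

def step (p : ℕ × ℕ) (c : XLetter) : ℕ × ℕ := (p.1 + c.ca, p.2 + c.cb)

def pts : List XLetter → ℕ × ℕ → Finset (ℕ × ℕ)
  | [], _ => ∅
  | c :: t, p => insert (step p c) (pts t (step p c))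

@[simp] lemma pts_nil (p : ℕ × ℕ) : pts [] p = ∅ := rfl

lemma pts_cons (c : XLetter) (t : List XLetter) (p : ℕ × ℕ) :
    pts (c :: t) p = insert (step p c) (pts t (step p c)) := rfl

lemma pts_mem {w : List XLetter} {p q : ℕ × ℕ} (hq : q ∈ pts w p) :
    p.1 ≤ q.1 ∧ p.2 ≤ q.2 ∧ p.1 + p.2 < q.1 + q.2 ∧
      q.1 ≤ p.1 + (tot w).1 ∧ q.2 ≤ p.2 + (tot w).2 := by
  induction w generalizing p with
  | nil => simp [pts] at hq
  | cons c t ih =>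
    rw [pts_cons, Finset.mem_insert] at hq
    have h1 := ca_le c; have h2 := cb_le c; have h3 := ca_cb_pos c
    rcases hq with rfl | hq
    · simp only [step, tot_cons]
      omega
    · have := ih hq
      simp only [step] at this
      simp only [tot_cons]
      omega

lemma pts_append (u v : List XLetter) (p : ℕ × ℕ) :
    pts (u ++ v) p = pts u p ∪ pts v (p.1 + (tot u).1, p.2 + (tot u).2) := by
  induction u generalizing p with
  | nil => simp [pts]
  | cons c t ih =>
    rw [List.cons_append, pts_cons, pts_cons, ih]
    have he : ((step p c).1 + (tot t).1, (step p c).2 + (tot t).2)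
        = (p.1 + (tot (c :: t)).1, p.2 + (tot (c :: t)).2) := by
      simp only [step, tot_cons, Prod.mk.injEq]
      omega
    rw [he, Finset.insert_union]

lemma pts_chain {w : List XLetter} {p q q' : ℕ × ℕ} (hq : q ∈ pts w p) (hq' : q' ∈ pts w p) :
    (q.1 ≤ q'.1 ∧ q.2 ≤ q'.2) ∨ (q'.1 ≤ q.1 ∧ q'.2 ≤ q.2) := by
  induction w generalizing p with
  | nil => simp [pts] at hq
  | cons c t ih =>
    rw [pts_cons, Finset.mem_insert] at hq hq'
    rcases hq with rfl | hq
    · rcases hq' with rfl | hq'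
      · left; omega
      · have := pts_mem hq'; left; omega
    · rcases hq' with rfl | hq'
      · have := pts_mem hq; right; omega
      · exact ih hq hq'

lemma pts_cover1 {w : List XLetter} {p : ℕ × ℕ} {x : ℕ} (h1 : p.1 < x)
    (h2 : x ≤ p.1 + (tot w).1) : ∃ q ∈ pts w p, q.1 = x := by
  induction w generalizing p with
  | nil => simp [tot] at h2; omega
  | cons c t ih =>
    have hc := ca_le c
    by_cases hx : x ≤ (step p c).1
    · refine ⟨step p c, Finset.mem_insert_self _ _, ?_⟩
      simp only [step] at hx ⊢
      omega
    · push_neg at hx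
      have h2' : x ≤ (step p c).1 + (tot t).1 := by
        simp only [step]; simp only [tot_cons] at h2; omega
      obtain ⟨q, hq, hqx⟩ := ih hx h2'
      exact ⟨q, Finset.mem_insert_of_mem hq, hqx⟩

lemma pts_cover2 {w : List XLetter} {p : ℕ × ℕ} {y : ℕ} (h1 : p.2 < y)
    (h2 : y ≤ p.2 + (tot w).2) : ∃ q ∈ pts w p, q.2 = y := by
  induction w generalizing p with
  | nil => simp [tot] at h2; omega
  | cons c t ih =>
    have hc := cb_le c
    by_cases hy : y ≤ (step p c).2
    · refine ⟨step p c, Finset.mem_insert_self _ _, ?_⟩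
      simp only [step] at hy ⊢
      omega
    · push_neg at hy
      have h2' : y ≤ (step p c).2 + (tot t).2 := by
        simp only [step]; simp only [tot_cons] at h2; omega
      obtain ⟨q, hq, hqy⟩ := ih hy h2'
      exact ⟨q, Finset.mem_insert_of_mem hq, hqy⟩

lemma pts_decomp {w : List XLetter} {p q : ℕ × ℕ} (hq : q ∈ pts w p) :
    ∃ u c v, w = u ++ c :: v ∧ q = step (p.1 + (tot u).1, p.2 + (tot u).2) c := by
  induction w generalizing p with
  | nil => simp [pts] at hq
  | cons c t ih =>
    rw [pts_cons, Finset.mem_insert] at hq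
    rcases hq with rfl | hq
    · refine ⟨[], c, t, rfl, ?_⟩
      simp [step]
    · obtain ⟨u, c', v, hw, hq⟩ := ih hq
      refine ⟨c :: u, c', v, by rw [hw, List.cons_append], ?_⟩
      rw [hq]
      simp only [step, tot_cons, Prod.mk.injEq]
      omega

lemma pts_inj : ∀ (w w' : List XLetter) (p : ℕ × ℕ), pts w p = pts w' p → w = w' := by
  intro w
  induction w with
  | nil =>
    intro w' p h
    cases w' with
    | nil => rfl
    | cons c t =>
      exfalso
      have : step p c ∈ pts (c :: t) p := Finset.mem_insert_self _ _
      rw [← h] at this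
      simp [pts] at this
  | cons c t ih =>
    intro w' p h
    cases w' with
    | nil =>
      exfalso
      have : step p c ∈ pts (c :: t) p := Finset.mem_insert_self _ _
      rw [h] at this
      simp [pts] at this
    | cons c' t' =>
      have hcc : step p c = step p c' := by
        by_contra hne
        have h1 : step p c ∈ pts (c' :: t') p := by
          rw [← h]; exact Finset.mem_insert_self _ _
        have h2 : step p c' ∈ pts (c :: t) p := by
          rw [h]; exact Finset.mem_insert_self _ _
        rw [pts_cons, Finset.mem_insert] at h1 h2
        rcases h1 with h1 | h1
        · exact hne h1
        · rcases h2 with h2 | h2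
          · exact hne h2.symm
          · have a1 := pts_mem h1
            have a2 := pts_mem h2
            omega
      have hc : c = c' := by
        have h1 : p.1 + c.ca = p.1 + c'.ca := congrArg Prod.fst hcc
        have h2 : p.2 + c.cb = p.2 + c'.cb := congrArg Prod.snd hcc
        cases c <;> cases c' <;> simp_all [XLetter.ca, XLetter.cb]
      subst hc
      rw [pts_cons, pts_cons, ← hcc] at h
      have htail : pts t (step p c) = pts t' (step p c) := by
        ext q
        constructor
        · intro hq
          have hmem : q ∈ insert (step p c) (pts t' (step p c)) := by
            rw [← h]; exact Finset.mem_insert_of_mem hq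
          rw [Finset.mem_insert] at hmem
          rcases hmem with rfl | hmem
          · have := pts_mem hq; omega
          · exact hmem
        · intro hq
          have hmem : q ∈ insert (step p c) (pts t (step p c)) := by
            rw [h, ← hcc]; exact Finset.mem_insert_of_mem hq
          rw [Finset.mem_insert] at hmem
          rcases hmem with rfl | hmem
          · have := pts_mem hq; omega
          · exact hmem
      rw [ih t' (step p c) htail]

lemma xstep_tot {x y : List XLetter} (h : XStep x y) : tot x = tot y := by
  obtain ⟨u, v, rfl, (rfl | rfl)⟩ := h <;>
    · simp only [tot, List.map_append, List.sum_append, List.map_cons, List.map_nil,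
        List.sum_cons, List.sum_nil, XLetter.ca, XLetter.cb, Prod.mk.injEq]
      omega

lemma xstep_pts {x y : List XLetter} (h : XStep x y) (p : ℕ × ℕ) :
    ∃ q, q ∉ pts x p ∧ pts y p = insert q (pts x p) := by
  obtain ⟨u, v, rfl, hy⟩ := h
  set s : ℕ × ℕ := (p.1 + (tot u).1, p.2 + (tot u).2) with hs
  have hs1 : s.1 = p.1 + (tot u).1 := by rw [hs]
  have hs2 : s.2 = p.2 + (tot u).2 := by rw [hs]
  have hx : pts (u ++ [XLetter.AB] ++ v) p
      = pts u p ∪ insert (s.1 + 1, s.2 + 1) (pts v (s.1 + 1, s.2 + 1)) := by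
    rw [List.append_assoc, pts_append]
    rfl
  have hnotu : ∀ q : ℕ × ℕ, q ∈ pts u p → q.1 ≤ s.1 ∧ q.2 ≤ s.2 := by
    intro q hq; have := pts_mem hq; omega
  have hnotv : ∀ q : ℕ × ℕ, q ∈ pts v (s.1 + 1, s.2 + 1) → s.1 + 1 ≤ q.1 ∧ s.2 + 1 ≤ q.2 := by
    intro q hq; have := pts_mem hq; omega
  rcases hy with rfl | rfl
  · refine ⟨(s.1 + 1, s.2), ?_, ?_⟩
    · rw [hx]
      simp only [Finset.mem_union, Finset.mem_insert]
      rintro (hq | hq | hq)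
      · have := hnotu _ hq; omega
      · have := congrArg Prod.snd hq; simp only at this; omega
      · have := hnotv _ hq; omega
    · rw [hx, List.append_assoc, pts_append]
      show pts u p ∪ pts (XLetter.A :: XLetter.B :: v) s
          = insert (s.1 + 1, s.2) (pts u p ∪ insert (s.1 + 1, s.2 + 1) (pts v (s.1 + 1, s.2 + 1)))
      have e1 : step s XLetter.A = (s.1 + 1, s.2) := by simp [step, XLetter.ca, XLetter.cb]
      have e2 : step (step s XLetter.A) XLetter.B = (s.1 + 1, s.2 + 1) := by
        simp [step, XLetter.ca, XLetter.cb]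
      rw [pts_cons, pts_cons, e2, e1, Finset.union_insert]
  · refine ⟨(s.1, s.2 + 1), ?_, ?_⟩
    · rw [hx]
      simp only [Finset.mem_union, Finset.mem_insert]
      rintro (hq | hq | hq)
      · have := hnotu _ hq; omega
      · have := congrArg Prod.fst hq; simp only at this; omega
      · have := hnotv _ hq; omega
    · rw [hx, List.append_assoc, pts_append]
      show pts u p ∪ pts (XLetter.B :: XLetter.A :: v) s
          = insert (s.1, s.2 + 1) (pts u p ∪ insert (s.1 + 1, s.2 + 1) (pts v (s.1 + 1, s.2 + 1)))
      have e1 : step s XLetter.B = (s.1, s.2 + 1) := by simp [step, XLetter.ca, XLetter.cb]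
      have e2 : step (step s XLetter.B) XLetter.A = (s.1 + 1, s.2 + 1) := by
        simp [step, XLetter.ca, XLetter.cb]
      rw [pts_cons, pts_cons, e2, e1, Finset.union_insert]

lemma rtg_pts {x y : List XLetter} (h : Relation.ReflTransGen XStep x y) (p : ℕ × ℕ) :
    pts x p ⊆ pts y p := by
  induction h with
  | refl => exact subset_rfl
  | tail _ hstep ih =>
    obtain ⟨q, _, hq⟩ := xstep_pts hstep p
    rw [hq]
    exact ih.trans (Finset.subset_insert _ _)

end XPath

namespace XPath

lemma pathlike_exists : ∀ (k T1 T2 : ℕ) (p : ℕ × ℕ) (S : Finset (ℕ × ℕ)),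
    T1 + T2 ≤ k →
    (∀ q ∈ S, p.1 ≤ q.1 ∧ p.2 ≤ q.2 ∧ p.1 + p.2 < q.1 + q.2 ∧ q.1 ≤ p.1 + T1 ∧ q.2 ≤ p.2 + T2) →
    (∀ q ∈ S, ∀ q' ∈ S, (q.1 ≤ q'.1 ∧ q.2 ≤ q'.2) ∨ (q'.1 ≤ q.1 ∧ q'.2 ≤ q.2)) →
    (∀ x, p.1 < x → x ≤ p.1 + T1 → ∃ q ∈ S, q.1 = x) →
    (∀ y, p.2 < y → y ≤ p.2 + T2 → ∃ q ∈ S, q.2 = y) →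
    ∃ w, tot w = (T1, T2) ∧ pts w p = S := by
  intro k
  induction k with
  | zero =>
    intro T1 T2 p S hk hbd hch hc1 hc2
    have h1 : T1 = 0 := by omega
    have h2 : T2 = 0 := by omega
    subst h1; subst h2
    refine ⟨[], rfl, ?_⟩
    rw [pts_nil]
    symm
    rw [Finset.eq_empty_iff_forall_notMem]
    intro q hq
    have := hbd q hq
    omega
  | succ k ih =>
    intro T1 T2 p S hk hbd hch hc1 hc2
    by_cases hT : T1 = 0 ∧ T2 = 0
    · obtain ⟨h1, h2⟩ := hT
      subst h1; subst h2
      refine ⟨[], rfl, ?_⟩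
      rw [pts_nil]
      symm
      rw [Finset.eq_empty_iff_forall_notMem]
      intro q hq
      have := hbd q hq
      omega
    · by_cases hA : ((p.1 + 1, p.2) : ℕ × ℕ) ∈ S
      · have hT1 : 1 ≤ T1 := by have := hbd _ hA; simp only at this; omega
        have hbd' : ∀ q ∈ S.erase (p.1 + 1, p.2), p.1 + 1 ≤ q.1 ∧ p.2 ≤ q.2 ∧
            (p.1 + 1) + p.2 < q.1 + q.2 ∧ q.1 ≤ (p.1 + 1) + (T1 - 1) ∧ q.2 ≤ p.2 + T2 := by
          intro q hq
          obtain ⟨hne, hqS⟩ := Finset.mem_erase.mp hq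
          have hb := hbd q hqS
          have hch2 : (q.1 ≤ p.1 + 1 ∧ q.2 ≤ p.2) ∨ (p.1 + 1 ≤ q.1 ∧ p.2 ≤ q.2) := by
            simpa using hch q hqS _ hA
          have hqne : ¬(q.1 = p.1 + 1 ∧ q.2 = p.2) := by
            rintro ⟨e1, e2⟩
            exact hne (by rw [Prod.ext_iff]; exact ⟨e1, e2⟩)
          omega
        have hch' : ∀ q ∈ S.erase (p.1 + 1, p.2), ∀ q' ∈ S.erase (p.1 + 1, p.2),
            (q.1 ≤ q'.1 ∧ q.2 ≤ q'.2) ∨ (q'.1 ≤ q.1 ∧ q'.2 ≤ q.2) := fun q hq q' hq' =>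
          hch q (Finset.mem_of_mem_erase hq) q' (Finset.mem_of_mem_erase hq')
        have hc1' : ∀ x, p.1 + 1 < x → x ≤ (p.1 + 1) + (T1 - 1) →
            ∃ q ∈ S.erase (p.1 + 1, p.2), q.1 = x := by
          intro x h1 h2
          obtain ⟨q, hq, hqx⟩ := hc1 x (by omega) (by omega)
          refine ⟨q, Finset.mem_erase.mpr ⟨?_, hq⟩, hqx⟩
          intro he; rw [he] at hqx; simp at hqx; omega
        have hc2' : ∀ y, p.2 < y → y ≤ p.2 + T2 → ∃ q ∈ S.erase (p.1 + 1, p.2), q.2 = y := by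
          intro y h1 h2
          obtain ⟨q, hq, hqy⟩ := hc2 y h1 h2
          refine ⟨q, Finset.mem_erase.mpr ⟨?_, hq⟩, hqy⟩
          intro he; rw [he] at hqy; simp at hqy; omega
        obtain ⟨w', hwt, hwp⟩ := ih (T1 - 1) T2 (p.1 + 1, p.2) (S.erase (p.1 + 1, p.2))
          (by omega) hbd' hch' hc1' hc2'
        refine ⟨XLetter.A :: w', ?_, ?_⟩
        · rw [tot_cons, hwt]
          rw [Prod.ext_iff]
          simp [XLetter.ca, XLetter.cb]
          omega
        · rw [pts_cons]
          have hst : step p XLetter.A = (p.1 + 1, p.2) := by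
            simp [step, XLetter.ca, XLetter.cb]
          rw [hst, hwp, Finset.insert_erase hA]
      · by_cases hB : ((p.1, p.2 + 1) : ℕ × ℕ) ∈ S
        · have hT2 : 1 ≤ T2 := by have := hbd _ hB; simp only at this; omega
          have hbd' : ∀ q ∈ S.erase (p.1, p.2 + 1), p.1 ≤ q.1 ∧ p.2 + 1 ≤ q.2 ∧
              p.1 + (p.2 + 1) < q.1 + q.2 ∧ q.1 ≤ p.1 + T1 ∧ q.2 ≤ (p.2 + 1) + (T2 - 1) := by
            intro q hq
            obtain ⟨hne, hqS⟩ := Finset.mem_erase.mp hq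
            have hb := hbd q hqS
            have hch2 : (q.1 ≤ p.1 ∧ q.2 ≤ p.2 + 1) ∨ (p.1 ≤ q.1 ∧ p.2 + 1 ≤ q.2) := by
              simpa using hch q hqS _ hB
            have hqne : ¬(q.1 = p.1 ∧ q.2 = p.2 + 1) := by
              rintro ⟨e1, e2⟩
              exact hne (by rw [Prod.ext_iff]; exact ⟨e1, e2⟩)
            omega
          have hch' : ∀ q ∈ S.erase (p.1, p.2 + 1), ∀ q' ∈ S.erase (p.1, p.2 + 1),
              (q.1 ≤ q'.1 ∧ q.2 ≤ q'.2) ∨ (q'.1 ≤ q.1 ∧ q'.2 ≤ q.2) := fun q hq q' hq' =>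
            hch q (Finset.mem_of_mem_erase hq) q' (Finset.mem_of_mem_erase hq')
          have hc1' : ∀ x, p.1 < x → x ≤ p.1 + T1 → ∃ q ∈ S.erase (p.1, p.2 + 1), q.1 = x := by
            intro x h1 h2
            obtain ⟨q, hq, hqx⟩ := hc1 x h1 h2
            refine ⟨q, Finset.mem_erase.mpr ⟨?_, hq⟩, hqx⟩
            intro he; rw [he] at hqx; simp at hqx; omega
          have hc2' : ∀ y, p.2 + 1 < y → y ≤ (p.2 + 1) + (T2 - 1) →
              ∃ q ∈ S.erase (p.1, p.2 + 1), q.2 = y := by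
            intro y h1 h2
            obtain ⟨q, hq, hqy⟩ := hc2 y (by omega) (by omega)
            refine ⟨q, Finset.mem_erase.mpr ⟨?_, hq⟩, hqy⟩
            intro he; rw [he] at hqy; simp at hqy; omega
          obtain ⟨w', hwt, hwp⟩ := ih T1 (T2 - 1) (p.1, p.2 + 1) (S.erase (p.1, p.2 + 1))
            (by omega) hbd' hch' hc1' hc2'
          refine ⟨XLetter.B :: w', ?_, ?_⟩
          · rw [tot_cons, hwt]
            rw [Prod.ext_iff]
            simp [XLetter.ca, XLetter.cb]
            omega
          · rw [pts_cons]
            have hst : step p XLetter.B = (p.1, p.2 + 1) := by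
              simp [step, XLetter.ca, XLetter.cb]
            rw [hst, hwp, Finset.insert_erase hB]
        · -- diagonal case
          have key : ((p.1 + 1, p.2 + 1) : ℕ × ℕ) ∈ S ∧ 1 ≤ T1 ∧ 1 ≤ T2 := by
            rcases Nat.lt_or_ge 0 T1 with h | h
            · obtain ⟨q, hq, hqx⟩ := hc1 (p.1 + 1) (by omega) (by omega)
              have hb := hbd q hq
              have hq2 : p.2 + 1 ≤ q.2 := by
                rcases Nat.lt_or_ge p.2 q.2 with h' | h'
                · omega
                · exfalso; apply hA
                  have he : q = (p.1 + 1, p.2) := by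
                    rw [Prod.ext_iff]; constructor <;> omega
                  rwa [← he]
              have hT2 : 1 ≤ T2 := by omega
              obtain ⟨q', hq', hqy⟩ := hc2 (p.2 + 1) (by omega) (by omega)
              have hb' := hbd q' hq'
              have hq'1 : p.1 + 1 ≤ q'.1 := by
                rcases Nat.lt_or_ge p.1 q'.1 with h' | h'
                · omega
                · exfalso; apply hB
                  have he : q' = (p.1, p.2 + 1) := by
                    rw [Prod.ext_iff]; constructor <;> omega
                  rwa [← he]
              rcases hch q hq q' hq' with hcc | hcc
              · have he : q = (p.1 + 1, p.2 + 1) := by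
                  rw [Prod.ext_iff]; constructor <;> omega
                exact ⟨he ▸ hq, by omega, hT2⟩
              · have he : q' = (p.1 + 1, p.2 + 1) := by
                  rw [Prod.ext_iff]; constructor <;> omega
                exact ⟨he ▸ hq', by omega, hT2⟩
            · have hT2 : 1 ≤ T2 := by omega
              obtain ⟨q, hq, hqy⟩ := hc2 (p.2 + 1) (by omega) (by omega)
              have hb := hbd q hq
              exfalso; apply hB
              have he : q = (p.1, p.2 + 1) := by
                rw [Prod.ext_iff]; constructor <;> omega
              rwa [← he]
          obtain ⟨hD, hT1, hT2⟩ := key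
          have hbd' : ∀ q ∈ S.erase (p.1 + 1, p.2 + 1), p.1 + 1 ≤ q.1 ∧ p.2 + 1 ≤ q.2 ∧
              (p.1 + 1) + (p.2 + 1) < q.1 + q.2 ∧ q.1 ≤ (p.1 + 1) + (T1 - 1) ∧
              q.2 ≤ (p.2 + 1) + (T2 - 1) := by
            intro q hq
            obtain ⟨hne, hqS⟩ := Finset.mem_erase.mp hq
            have hb := hbd q hqS
            have hch2 : (q.1 ≤ p.1 + 1 ∧ q.2 ≤ p.2 + 1) ∨ (p.1 + 1 ≤ q.1 ∧ p.2 + 1 ≤ q.2) := by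
              simpa using hch q hqS _ hD
            have hqne : ¬(q.1 = p.1 + 1 ∧ q.2 = p.2 + 1) := by
              rintro ⟨e1, e2⟩
              exact hne (by rw [Prod.ext_iff]; exact ⟨e1, e2⟩)
            have hnA : ¬(q.1 = p.1 + 1 ∧ q.2 = p.2) := by
              rintro ⟨e1, e2⟩
              apply hA
              have he : q = (p.1 + 1, p.2) := by rw [Prod.ext_iff]; exact ⟨e1, e2⟩
              rwa [← he]
            have hnB : ¬(q.1 = p.1 ∧ q.2 = p.2 + 1) := by
              rintro ⟨e1, e2⟩
              apply hB
              have he : q = (p.1, p.2 + 1) := by rw [Prod.ext_iff]; exact ⟨e1, e2⟩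
              rwa [← he]
            omega
          have hch' : ∀ q ∈ S.erase (p.1 + 1, p.2 + 1), ∀ q' ∈ S.erase (p.1 + 1, p.2 + 1),
              (q.1 ≤ q'.1 ∧ q.2 ≤ q'.2) ∨ (q'.1 ≤ q.1 ∧ q'.2 ≤ q.2) := fun q hq q' hq' =>
            hch q (Finset.mem_of_mem_erase hq) q' (Finset.mem_of_mem_erase hq')
          have hc1' : ∀ x, p.1 + 1 < x → x ≤ (p.1 + 1) + (T1 - 1) →
              ∃ q ∈ S.erase (p.1 + 1, p.2 + 1), q.1 = x := by
            intro x h1 h2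
            obtain ⟨q, hq, hqx⟩ := hc1 x (by omega) (by omega)
            refine ⟨q, Finset.mem_erase.mpr ⟨?_, hq⟩, hqx⟩
            intro he; rw [he] at hqx; simp at hqx; omega
          have hc2' : ∀ y, p.2 + 1 < y → y ≤ (p.2 + 1) + (T2 - 1) →
              ∃ q ∈ S.erase (p.1 + 1, p.2 + 1), q.2 = y := by
            intro y h1 h2
            obtain ⟨q, hq, hqy⟩ := hc2 y (by omega) (by omega)
            refine ⟨q, Finset.mem_erase.mpr ⟨?_, hq⟩, hqy⟩
            intro he; rw [he] at hqy; simp at hqy; omega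
          obtain ⟨w', hwt, hwp⟩ := ih (T1 - 1) (T2 - 1) (p.1 + 1, p.2 + 1)
            (S.erase (p.1 + 1, p.2 + 1)) (by omega) hbd' hch' hc1' hc2'
          refine ⟨XLetter.AB :: w', ?_, ?_⟩
          · rw [tot_cons, hwt]
            rw [Prod.ext_iff]
            simp [XLetter.ca, XLetter.cb]
            omega
          · rw [pts_cons]
            have hst : step p XLetter.AB = (p.1 + 1, p.2 + 1) := by
              simp [step, XLetter.ca, XLetter.cb]
            rw [hst, hwp, Finset.insert_erase hD]

end XPath

namespace XPath

lemma erase_step {w' : List XLetter} {p q : ℕ × ℕ} (hq : q ∈ pts w' p)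
    (hcov1 : ∀ x, p.1 < x → x ≤ p.1 + (tot w').1 → ∃ t ∈ (pts w' p).erase q, t.1 = x)
    (hcov2 : ∀ y, p.2 < y → y ≤ p.2 + (tot w').2 → ∃ t ∈ (pts w' p).erase q, t.2 = y) :
    ∃ w, pts w p = (pts w' p).erase q ∧ XStep w w' := by
  have hbq := pts_mem hq
  obtain ⟨u, c1, v, rfl, hqe⟩ := pts_decomp hq
  set s : ℕ × ℕ := (p.1 + (tot u).1, p.2 + (tot u).2) with hs
  have hs1 : s.1 = p.1 + (tot u).1 := by rw [hs]
  have hs2 : s.2 = p.2 + (tot u).2 := by rw [hs]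
  have hca1 := ca_le c1; have hcb1 := cb_le c1; have hpos1 := ca_cb_pos c1
  have hq1 : q.1 = s.1 + c1.ca := by rw [hqe]; rfl
  have hq2 : q.2 = s.2 + c1.cb := by rw [hqe]; rfl
  have htu1 : (tot (u ++ c1 :: v)).1 = (tot u).1 + c1.ca + (tot v).1 := by
    rw [tot_append]; simp [tot_cons]; omega
  have htu2 : (tot (u ++ c1 :: v)).2 = (tot u).2 + c1.cb + (tot v).2 := by
    rw [tot_append]; simp [tot_cons]; omega
  -- the final point lies in the erased set
  have hlast : ((p.1 + (tot (u ++ c1 :: v)).1, p.2 + (tot (u ++ c1 :: v)).2) : ℕ × ℕ)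
      ∈ (pts (u ++ c1 :: v) p).erase q := by
    rcases Nat.lt_or_ge 0 (tot (u ++ c1 :: v)).1 with hT | hT
    · obtain ⟨t, ht, htx⟩ := hcov1 (p.1 + (tot (u ++ c1 :: v)).1) (by omega) (by omega)
      have hbt := pts_mem (Finset.mem_of_mem_erase ht)
      rcases Nat.lt_or_ge 0 (tot (u ++ c1 :: v)).2 with hT2 | hT2
      · obtain ⟨t', ht', hty⟩ := hcov2 (p.2 + (tot (u ++ c1 :: v)).2) (by omega) (by omega)
        have hbt' := pts_mem (Finset.mem_of_mem_erase ht')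
        rcases pts_chain (Finset.mem_of_mem_erase ht) (Finset.mem_of_mem_erase ht')
          with hcc | hcc
        · have he : t' = (p.1 + (tot (u ++ c1 :: v)).1, p.2 + (tot (u ++ c1 :: v)).2) := by
            rw [Prod.ext_iff]; constructor <;> omega
          rwa [← he]
        · have he : t = (p.1 + (tot (u ++ c1 :: v)).1, p.2 + (tot (u ++ c1 :: v)).2) := by
            rw [Prod.ext_iff]; constructor <;> omega
          rwa [← he]
      · have he : t = (p.1 + (tot (u ++ c1 :: v)).1, p.2 + (tot (u ++ c1 :: v)).2) := by
          rw [Prod.ext_iff]; constructor <;> omega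
        rwa [← he]
    · rcases Nat.lt_or_ge 0 (tot (u ++ c1 :: v)).2 with hT2 | hT2
      · obtain ⟨t, ht, hty⟩ := hcov2 (p.2 + (tot (u ++ c1 :: v)).2) (by omega) (by omega)
        have hbt := pts_mem (Finset.mem_of_mem_erase ht)
        have he : t = (p.1 + (tot (u ++ c1 :: v)).1, p.2 + (tot (u ++ c1 :: v)).2) := by
          rw [Prod.ext_iff]; constructor <;> omega
        rwa [← he]
      · exfalso; omega
  cases v with
  | nil =>
    exfalso
    have he : q = (p.1 + (tot (u ++ [c1])).1, p.2 + (tot (u ++ [c1])).2) := by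
      rw [Prod.ext_iff]
      have h1 : (tot (u ++ [c1])).1 = (tot u).1 + c1.ca + (tot ([] : List XLetter)).1 :=
        htu1
      have h2 : (tot (u ++ [c1])).2 = (tot u).2 + c1.cb + (tot ([] : List XLetter)).2 :=
        htu2
      simp only [tot_nil] at h1 h2
      constructor <;> omega
    rw [← he] at hlast
    exact (Finset.mem_erase.mp hlast).1 rfl
  | cons c2 v2 =>
    have hca2 := ca_le c2; have hcb2 := cb_le c2; have hpos2 := ca_cb_pos c2
    have hfull : pts (u ++ c1 :: c2 :: v2) p
        = pts u p ∪ insert q (insert (step q c2) (pts v2 (step q c2))) := by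
      rw [pts_append]
      show pts u p ∪ pts (c1 :: c2 :: v2) s = _
      rw [pts_cons, pts_cons, ← hqe]
    have hwit : ∀ t : ℕ × ℕ, t ∈ (pts (u ++ c1 :: c2 :: v2) p).erase q →
        (s.1 < t.1 ∨ s.2 < t.2) → t = step q c2 ∨ t ∈ pts v2 (step q c2) := by
      intro t ht hgt
      obtain ⟨hne, htm⟩ := Finset.mem_erase.mp ht
      rw [hfull] at htm
      rcases Finset.mem_union.mp htm with htm | htm
      · exfalso
        have := pts_mem htm
        omega
      · rcases Finset.mem_insert.mp htm with rfl | htm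
        · exact absurd rfl hne
        · exact Finset.mem_insert.mp htm
    have habove : ∀ t : ℕ × ℕ, t = step q c2 ∨ t ∈ pts v2 (step q c2) →
        q.1 + c2.ca ≤ t.1 ∧ q.2 + c2.cb ≤ t.2 := by
      intro t htt
      rcases htt with rfl | htt
      · simp only [step]; omega
      · have := pts_mem htt; simp only [step] at this; omega
    have hq1le : q.1 ≤ p.1 + (tot (u ++ c1 :: c2 :: v2)).1 := hbq.2.2.2.1
    have hq2le : q.2 ≤ p.2 + (tot (u ++ c1 :: c2 :: v2)).2 := hbq.2.2.2.2
    cases c1 with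
    | AB =>
      exfalso
      have hq1' : q.1 = s.1 + 1 := by rw [hq1]; rfl
      have hq2' : q.2 = s.2 + 1 := by rw [hq2]; rfl
      obtain ⟨t, ht, htx⟩ := hcov1 q.1 (by omega) (by omega)
      have htup := hwit t ht (by omega)
      have hta := habove t htup
      have htne : t ≠ q := (Finset.mem_erase.mp ht).1
      have ht2 : q.2 < t.2 := by
        rcases htup with rfl | htm
        · simp only [step] at htx ⊢
          rcases Nat.lt_or_ge q.2 (q.2 + c2.cb) with h | h
          · omega
          · -- c2.cb = 0, then c2.ca = 1 contradicts htx
            exfalso; apply htne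
            rw [Prod.ext_iff]; constructor <;> simp only [step] <;> omega
        · have := pts_mem htm
          simp only [step] at this
          rcases Nat.lt_or_ge q.2 t.2 with h | h
          · exact h
          · exfalso; apply htne; rw [Prod.ext_iff]; constructor <;> omega
      obtain ⟨t', ht', hty⟩ := hcov2 q.2 (by omega) (by omega)
      have htup' := hwit t' ht' (by omega)
      have hta' := habove t' htup'
      have htne' : t' ≠ q := (Finset.mem_erase.mp ht').1
      have ht1' : q.1 < t'.1 := by
        rcases htup' with rfl | htm
        · simp only [step] at hty ⊢
          rcases Nat.lt_or_ge q.1 (q.1 + c2.ca) with h | h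
          · omega
          · exfalso; apply htne'
            rw [Prod.ext_iff]; constructor <;> simp only [step] <;> omega
        · have := pts_mem htm
          simp only [step] at this
          rcases Nat.lt_or_ge q.1 t'.1 with h | h
          · exact h
          · exfalso; apply htne'; rw [Prod.ext_iff]; constructor <;> omega
      have hchtt := pts_chain (Finset.mem_of_mem_erase ht) (Finset.mem_of_mem_erase ht')
      omega
    | A =>
      have hq1' : q.1 = s.1 + 1 := by rw [hq1]; rfl
      have hq2' : q.2 = s.2 := by rw [hq2]; simp [XLetter.cb]
      obtain ⟨t, ht, htx⟩ := hcov1 q.1 (by omega) (by omega)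
      have htup := hwit t ht (by omega)
      have hta := habove t htup
      have hca0 : c2.ca = 0 := by omega
      have hc2B : c2 = XLetter.B := by
        cases c2
        · simp [XLetter.ca] at hca0
        · rfl
        · simp [XLetter.ca] at hca0
      subst hc2B
      refine ⟨u ++ XLetter.AB :: v2, ?_, u, v2, by simp, Or.inl (by simp)⟩
      rw [pts_append, hfull]
      show pts u p ∪ pts (XLetter.AB :: v2) s = _
      have e : step q XLetter.B = step s XLetter.AB := by
        rw [Prod.ext_iff]
        constructor <;> simp [step, XLetter.ca, XLetter.cb] <;> omega
      have hqnotu : q ∉ pts u p := by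
        intro hc
        have := pts_mem hc
        omega
      have hqnotX : q ∉ insert (step q XLetter.B) (pts v2 (step q XLetter.B)) := by
        intro hc
        rcases Finset.mem_insert.mp hc with he | hc
        · have := congrArg Prod.snd he
          simp [step, XLetter.cb] at this
        · have := pts_mem hc
          simp only [step, XLetter.ca, XLetter.cb] at this
          omega
      rw [Finset.erase_union_distrib, Finset.erase_eq_of_notMem hqnotu,
        Finset.erase_insert hqnotX, pts_cons, e]
    | B =>
      have hq1' : q.1 = s.1 := by rw [hq1]; simp [XLetter.ca]
      have hq2' : q.2 = s.2 + 1 := by rw [hq2]; rfl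
      obtain ⟨t, ht, hty⟩ := hcov2 q.2 (by omega) (by omega)
      have htup := hwit t ht (by omega)
      have hta := habove t htup
      have hcb0 : c2.cb = 0 := by omega
      have hc2A : c2 = XLetter.A := by
        cases c2
        · rfl
        · simp [XLetter.cb] at hcb0
        · simp [XLetter.cb] at hcb0
      subst hc2A
      refine ⟨u ++ XLetter.AB :: v2, ?_, u, v2, by simp, Or.inr (by simp)⟩
      rw [pts_append, hfull]
      show pts u p ∪ pts (XLetter.AB :: v2) s = _
      have e : step q XLetter.A = step s XLetter.AB := by
        rw [Prod.ext_iff]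
        constructor <;> simp [step, XLetter.ca, XLetter.cb] <;> omega
      have hqnotu : q ∉ pts u p := by
        intro hc
        have := pts_mem hc
        omega
      have hqnotX : q ∉ insert (step q XLetter.A) (pts v2 (step q XLetter.A)) := by
        intro hc
        rcases Finset.mem_insert.mp hc with he | hc
        · have := congrArg Prod.fst he
          simp [step, XLetter.ca] at this
        · have := pts_mem hc
          simp only [step, XLetter.ca, XLetter.cb] at this
          omega
      rw [Finset.erase_union_distrib, Finset.erase_eq_of_notMem hqnotu,
        Finset.erase_insert hqnotX, pts_cons, e]

lemma subset_rtg : ∀ (k : ℕ) (w w' : List XLetter) (p : ℕ × ℕ), w'.length ≤ k →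
    tot w = tot w' → pts w p ⊆ pts w' p → Relation.ReflTransGen XStep w w' := by
  intro k
  induction k with
  | zero =>
    intro w w' p hk ht hsub
    have hw' : w' = [] := List.length_eq_zero_iff.mp (by omega)
    subst hw'
    have h0 : pts w p = ∅ := Finset.subset_empty.mp (by simpa using hsub)
    have : w = [] := pts_inj w [] p (by simpa using h0)
    subst this
    exact Relation.ReflTransGen.refl
  | succ k ih =>
    intro w w' p hk ht hsub
    by_cases heq : pts w p = pts w' p
    · rw [pts_inj w w' p heq]
    · obtain ⟨q, hq, hqn⟩ := Finset.exists_of_ssubset (ssubset_of_subset_of_ne hsub heq)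
      have hcov1 : ∀ x, p.1 < x → x ≤ p.1 + (tot w').1 →
          ∃ t ∈ (pts w' p).erase q, t.1 = x := by
        intro x h1 h2
        obtain ⟨t, htm, htx⟩ := pts_cover1 (w := w) h1 (by rw [ht]; exact h2)
        exact ⟨t, Finset.mem_erase.mpr ⟨fun he => hqn (he ▸ htm), hsub htm⟩, htx⟩
      have hcov2 : ∀ y, p.2 < y → y ≤ p.2 + (tot w').2 →
          ∃ t ∈ (pts w' p).erase q, t.2 = y := by
        intro y h1 h2
        obtain ⟨t, htm, hty⟩ := pts_cover2 (w := w) h1 (by rw [ht]; exact h2)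
        exact ⟨t, Finset.mem_erase.mpr ⟨fun he => hqn (he ▸ htm), hsub htm⟩, hty⟩
      obtain ⟨w'', hw''p, hstep⟩ := erase_step hq hcov1 hcov2
      have hlen : w''.length ≤ k := by
        have := hstep.length_lt
        omega
      have ht'' : tot w = tot w'' := by rw [ht, xstep_tot hstep]
      have hsub'' : pts w p ⊆ pts w'' p := by
        rw [hw''p]
        intro t htm
        exact Finset.mem_erase.mpr ⟨fun he => hqn (he ▸ htm), hsub htm⟩
      exact (ih w w'' p hlen ht'' hsub'').tail hstep
end XPath

namespace XPath

def enum (F : Finset ℕ) (j : ℕ) : ℕ := ((0 : ℕ) :: F.sort (· ≤ ·)).getD j 0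

lemma enum_zero (F : Finset ℕ) : enum F 0 = 0 := rfl

lemma enum_sorted {F : Finset ℕ} (hpos : ∀ a ∈ F, 1 ≤ a) :
    ((0 : ℕ) :: F.sort (· ≤ ·)).Pairwise (· < ·) := by
  rw [List.pairwise_cons]
  exact ⟨fun b hb => hpos b ((Finset.mem_sort _).mp hb), F.sortedLT_sort.pairwise⟩

lemma enum_strictMono {F : Finset ℕ} (hpos : ∀ a ∈ F, 1 ≤ a) {i j : ℕ}
    (hij : i < j) (hj : j ≤ F.card) : enum F i < enum F j := by
  have hi' : i < ((0:ℕ) :: F.sort (· ≤ ·)).length := by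
    simp [Finset.length_sort]; omega
  have hj' : j < ((0:ℕ) :: F.sort (· ≤ ·)).length := by
    simp [Finset.length_sort]; omega
  rw [enum, enum, List.getD_eq_getElem _ _ hi', List.getD_eq_getElem _ _ hj']
  exact List.pairwise_iff_getElem.mp (enum_sorted hpos) i j hi' hj' hij

lemma enum_mono {F : Finset ℕ} (hpos : ∀ a ∈ F, 1 ≤ a) {i j : ℕ}
    (hij : i ≤ j) (hj : j ≤ F.card) : enum F i ≤ enum F j := by
  rcases Nat.lt_or_ge i j with h | h
  · exact (enum_strictMono hpos h hj).le
  · have : i = j := by omega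
    rw [this]

lemma enum_mem {F : Finset ℕ} {j : ℕ} (h1 : 1 ≤ j) (h2 : j ≤ F.card) : enum F j ∈ F := by
  cases j with
  | zero => omega
  | succ j =>
    rw [enum, List.getD_cons_succ]
    have hj : j < (F.sort (· ≤ ·)).length := by simp [Finset.length_sort]; omega
    rw [List.getD_eq_getElem _ _ hj]
    exact (Finset.mem_sort _).mp (List.getElem_mem hj)

lemma enum_surj {F : Finset ℕ} {a : ℕ} (ha : a ∈ F) :
    ∃ j, 1 ≤ j ∧ j ≤ F.card ∧ enum F j = a := by
  have hm : a ∈ F.sort (· ≤ ·) := (Finset.mem_sort _).mpr ha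
  obtain ⟨i, hi, he⟩ := List.mem_iff_getElem.mp hm
  refine ⟨i + 1, by omega, by simp [Finset.length_sort] at hi; omega, ?_⟩
  rw [enum, List.getD_cons_succ, List.getD_eq_getElem _ _ hi]
  exact he

lemma enum_pos_iff {F : Finset ℕ} (hpos : ∀ a ∈ F, 1 ≤ a) {j : ℕ} (hj : j ≤ F.card) :
    1 ≤ enum F j ↔ 1 ≤ j := by
  constructor
  · intro h
    by_contra hc
    push_neg at hc
    interval_cases j
    · rw [enum_zero] at h; omega
  · intro h
    exact hpos _ (enum_mem h hj)

end XPath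

namespace XPath

theorem psiCompat_elim {m : ℕ} {b c : PsiBracket m} (h : PsiCompat b c) :
    b.1.2 < c.1.1 ∨ c.1.2 < b.1.1 ∨ (c.1.1 ≤ b.1.1 ∧ b.1.2 ≤ c.1.2) ∨
      (b.1.1 ≤ c.1.1 ∧ c.1.2 ≤ b.1.2) := by
  obtain ⟨h1, h2, h3⟩ := b.2
  obtain ⟨h4, h5, h6⟩ := c.2
  rcases h with h | h | h
  · unfold PsiBracket.leaves at h
    by_contra hcon
    push_neg at hcon
    have hm1 : max b.1.1 c.1.1 ∈ Set.Icc b.1.1 b.1.2 := by rw [Set.mem_Icc]; omega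
    have hm2 : max b.1.1 c.1.1 ∈ Set.Icc c.1.1 c.1.2 := by rw [Set.mem_Icc]; omega
    exact Set.disjoint_left.mp h hm1 hm2
  · unfold PsiBracket.leaves at h
    rw [Set.Icc_subset_Icc_iff (by omega)] at h
    omega
  · unfold PsiBracket.leaves at h
    rw [Set.Icc_subset_Icc_iff (by omega)] at h
    omega

theorem fanCompat_inl_inl {n : ℕ} (b c : FanIntl n)
    (h : b.1.2 < c.1.1 ∨ c.1.2 < b.1.1 ∨ (c.1.1 ≤ b.1.1 ∧ b.1.2 ≤ c.1.2) ∨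
      (b.1.1 ≤ c.1.1 ∧ c.1.2 ≤ b.1.2)) :
    FanCompat (Sum.inl b) (Sum.inl c) := by
  obtain ⟨h1, h2, h3⟩ := b.2
  obtain ⟨h4, h5, h6⟩ := c.2
  show Disjoint (FanBracket.leaves (Sum.inl b)) (FanBracket.leaves (Sum.inl c)) ∨
    FanBracket.leaves (Sum.inl b) ⊆ FanBracket.leaves (Sum.inl c) ∨
    FanBracket.leaves (Sum.inl c) ⊆ FanBracket.leaves (Sum.inl b)
  rcases h with h | h | h | h
  · left
    refine Set.disjoint_left.mpr fun a ha hb => ?_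
    simp only [FanBracket.leaves, Set.mem_Icc] at ha hb
    omega
  · left
    refine Set.disjoint_left.mpr fun a ha hb => ?_
    simp only [FanBracket.leaves, Set.mem_Icc] at ha hb
    omega
  · right; left
    show Set.Icc b.1.1 b.1.2 ⊆ Set.Icc c.1.1 c.1.2
    exact Set.Icc_subset_Icc h.1 h.2
  · right; right
    show Set.Icc c.1.1 c.1.2 ⊆ Set.Icc b.1.1 b.1.2
    exact Set.Icc_subset_Icc h.1 h.2

def ntSet (n : ℕ) (Y : Psi (n + 1)) : Finset (FanBracket n) :=
  (Y.1.filter (fun b => b.1.1 ≠ 0 ∧ b.1.2 ≠ n + 1)).attach.image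
    (fun b => Sum.inl ⟨b.1.1, by
      have hm := b.2
      rw [Finset.mem_filter] at hm
      obtain ⟨hY, hne1, hne2⟩ := hm
      obtain ⟨hh1, hh2, hh3⟩ := b.1.2
      exact ⟨by omega, hh1, by omega⟩⟩)

lemma mem_ntSet_iff {n : ℕ} {Y : Psi (n + 1)} {x : FanBracket n} :
    x ∈ ntSet n Y ↔ ∃ b ∈ Y.1, b.1.1 ≠ 0 ∧ b.1.2 ≠ n + 1 ∧
      ∃ h, x = Sum.inl (⟨b.1, h⟩ : FanIntl n) := by
  unfold ntSet
  rw [Finset.mem_image]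
  constructor
  · rintro ⟨b, _, rfl⟩
    have hm := b.2
    rw [Finset.mem_filter] at hm
    exact ⟨b.1, hm.1, hm.2.1, hm.2.2, _, rfl⟩
  · rintro ⟨b, hbY, h1, h2, h3, rfl⟩
    exact ⟨⟨b, Finset.mem_filter.mpr ⟨hbY, h1, h2⟩⟩, Finset.mem_attach _ _, rfl⟩

def trSet (n : ℕ) (As Bs : ℕ → ℕ) (P : Finset (ℕ × ℕ))
    (H : ∀ q ∈ P, As q.1 < Bs q.2 ∧ Bs q.2 ≤ n + 1 ∧ ¬(As q.1 = 0 ∧ Bs q.2 = n + 1)) :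
    Finset (FanBracket n) :=
  P.attach.image (fun q => Sum.inr ⟨(As q.1.1, Bs q.1.2), H q.1 q.2⟩)

lemma mem_trSet_iff {n : ℕ} {As Bs : ℕ → ℕ} {P : Finset (ℕ × ℕ)}
    {H : ∀ q ∈ P, As q.1 < Bs q.2 ∧ Bs q.2 ≤ n + 1 ∧ ¬(As q.1 = 0 ∧ Bs q.2 = n + 1)}
    {x : FanBracket n} :
    x ∈ trSet n As Bs P H ↔
      ∃ q ∈ P, ∃ h, x = Sum.inr (⟨(As q.1, Bs q.2), h⟩ : FanTrunk n) := by
  unfold trSet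
  rw [Finset.mem_image]
  constructor
  · rintro ⟨q, _, rfl⟩
    exact ⟨q.1, q.2, _, rfl⟩
  · rintro ⟨q, hq, h, rfl⟩
    exact ⟨⟨q, hq⟩, Finset.mem_attach _ _, rfl⟩

lemma mem_cutBracket_inl {n : ℕ} {b : FanIntl n} {c : PsiBracket (n + 1)} :
    c ∈ cutBracket (Sum.inl b : FanBracket n) ↔ c.1 = b.1 := by
  simp only [cutBracket, Finset.mem_singleton]
  constructor
  · intro h; rw [h]
  · intro h; exact Subtype.ext h

lemma mem_cutBracket_inr {n : ℕ} {p : FanTrunk n} {c : PsiBracket (n + 1)} :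
    c ∈ cutBracket (Sum.inr p : FanBracket n) ↔
      (1 ≤ p.1.1 ∧ c.1 = (0, p.1.1)) ∨ (p.1.2 ≤ n ∧ c.1 = (p.1.2, n + 1)) := by
  simp only [cutBracket, Finset.mem_union]
  constructor
  · rintro (h | h)
    · left
      by_cases h1 : 1 ≤ p.1.1
      · rw [dif_pos h1, Finset.mem_singleton] at h
        exact ⟨h1, by rw [h]⟩
      · rw [dif_neg h1] at h
        exact absurd h (Finset.notMem_empty _)
    · right
      by_cases h1 : p.1.2 ≤ n
      · rw [dif_pos h1, Finset.mem_singleton] at h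
        exact ⟨h1, by rw [h]⟩
      · rw [dif_neg h1] at h
        exact absurd h (Finset.notMem_empty _)
  · rintro (⟨h1, h2⟩ | ⟨h1, h2⟩)
    · left; rw [dif_pos h1, Finset.mem_singleton]; exact Subtype.ext h2
    · right; rw [dif_pos h1, Finset.mem_singleton]; exact Subtype.ext h2

end XPath

open XPath

/-- **Lemma 3.2.** If `Y ∈ Ψ([n+1])` has exactly `ℓ` left-most nodes (brackets containing
the minimal leaf `0`) and `r` right-most nodes (brackets containing the maximal leaf
`n+1`), then the fiber `Π_n⁻¹(Y) ⊆ Φ(underline-n)` is isomorphic as a poset to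
`X_{ℓ,r}`. -/
theorem fiber_cutFan_orderIso_XWord (n : ℕ) (hn : 1 ≤ n) (Y : Psi (n + 1)) (l r : ℕ)
    (hl : (Y.1.filter fun b => b.1.1 = 0).card = l)
    (hr : (Y.1.filter fun b => b.1.2 = n + 1).card = r) :
    Nonempty ({T : Fan n // cutFan T = Y} ≃o XWord l r) := by
  classical
  set LA : Finset ℕ := (Y.1.filter fun b => b.1.1 = 0).image (fun b => b.1.2) with hLAdef
  set RB : Finset ℕ := (Y.1.filter fun b => b.1.2 = n + 1).image (fun b => b.1.1) with hRBdef
  have hLAcard : LA.card = l := by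
    rw [hLAdef, Finset.card_image_of_injOn, hl]
    intro b hb c hc he
    rw [Finset.mem_coe, Finset.mem_filter] at hb hc
    apply Subtype.ext
    rw [Prod.ext_iff]
    exact ⟨hb.2.trans hc.2.symm, he⟩
  have hRBcard : RB.card = r := by
    rw [hRBdef, Finset.card_image_of_injOn, hr]
    intro b hb c hc he
    rw [Finset.mem_coe, Finset.mem_filter] at hb hc
    apply Subtype.ext
    rw [Prod.ext_iff]
    exact ⟨he, hb.2.trans hc.2.symm⟩
  have hLAY : ∀ a ∈ LA, ∃ b ∈ Y.1, b.1 = ((0 : ℕ), a) := by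
    intro a ha
    rw [hLAdef, Finset.mem_image] at ha
    obtain ⟨b, hb, rfl⟩ := ha
    rw [Finset.mem_filter] at hb
    exact ⟨b, hb.1, by rw [Prod.ext_iff]; exact ⟨hb.2, rfl⟩⟩
  have hRBY : ∀ a ∈ RB, ∃ b ∈ Y.1, b.1 = (a, n + 1) := by
    intro a ha
    rw [hRBdef, Finset.mem_image] at ha
    obtain ⟨b, hb, rfl⟩ := ha
    rw [Finset.mem_filter] at hb
    exact ⟨b, hb.1, by rw [Prod.ext_iff]; exact ⟨rfl, hb.2⟩⟩
  have hYLA : ∀ b ∈ Y.1, b.1.1 = 0 → b.1.2 ∈ LA := by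
    intro b hb h0
    rw [hLAdef, Finset.mem_image]
    exact ⟨b, Finset.mem_filter.mpr ⟨hb, h0⟩, rfl⟩
  have hYRB : ∀ b ∈ Y.1, b.1.2 = n + 1 → b.1.1 ∈ RB := by
    intro b hb h0
    rw [hRBdef, Finset.mem_image]
    exact ⟨b, Finset.mem_filter.mpr ⟨hb, h0⟩, rfl⟩
  have hLAfacts : ∀ a ∈ LA, 1 ≤ a ∧ a ≤ n := by
    intro a ha
    obtain ⟨b, hb, he⟩ := hLAY a ha
    obtain ⟨h1, h2, h3⟩ := b.2
    have e1 : b.1.1 = 0 := by rw [he]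
    have e2 : b.1.2 = a := by rw [he]
    omega
  have hLApos : ∀ a ∈ LA, 1 ≤ a := fun a ha => (hLAfacts a ha).1
  have hLAbd : ∀ a ∈ LA, a ≤ n := fun a ha => (hLAfacts a ha).2
  have hRBfacts : ∀ a ∈ RB, 1 ≤ a ∧ a ≤ n := by
    intro a ha
    obtain ⟨b, hb, he⟩ := hRBY a ha
    obtain ⟨h1, h2, h3⟩ := b.2
    have e1 : b.1.1 = a := by rw [he]
    have e2 : b.1.2 = n + 1 := by rw [he]
    omega
  have hRBpos : ∀ a ∈ RB, 1 ≤ a := fun a ha => (hRBfacts a ha).1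
  have hRBbd : ∀ a ∈ RB, a ≤ n := fun a ha => (hRBfacts a ha).2
  have hABlt : ∀ a ∈ LA, ∀ b ∈ RB, a < b := by
    intro a ha b hb
    obtain ⟨ba, hba, hea⟩ := hLAY a ha
    obtain ⟨bb, hbb, heb⟩ := hRBY b hb
    have hcp := psiCompat_elim (Y.2 ba hba bb hbb)
    have ea1 : ba.1.1 = 0 := by rw [hea]
    have ea2 : ba.1.2 = a := by rw [hea]
    have eb1 : bb.1.1 = b := by rw [heb]
    have eb2 : bb.1.2 = n + 1 := by rw [heb]
    have hapos := hLApos a ha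
    have habd := hLAbd a ha
    have hbpos := hRBpos b hb
    have hbbd := hRBbd b hb
    omega
  -- enumerations
  set As : ℕ → ℕ := enum LA with hAsdef
  set RB' : Finset ℕ := RB.image (fun b => n + 1 - b) with hRB'def
  set Bs : ℕ → ℕ := fun j => n + 1 - enum RB' j with hBsdef
  have hRB'mem : ∀ a, a ∈ RB' ↔ ∃ b ∈ RB, n + 1 - b = a := by
    intro a
    rw [hRB'def, Finset.mem_image]
  have hRB'pos : ∀ a ∈ RB', 1 ≤ a := by
    intro a ha
    obtain ⟨b, hb, he⟩ := (hRB'mem a).mp ha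
    have := hRBbd b hb
    omega
  have hRB'card : RB'.card = r := by
    rw [hRB'def, Finset.card_image_of_injOn, hRBcard]
    intro b hb c hc he
    have he2 : n + 1 - b = n + 1 - c := he
    have h1 := hRBbd b (Finset.mem_coe.mp hb)
    have h2 := hRBbd c (Finset.mem_coe.mp hc)
    omega
  have hAs0 : As 0 = 0 := rfl
  have hAsmem : ∀ j, 1 ≤ j → j ≤ l → As j ∈ LA := by
    intro j h1 h2
    exact enum_mem h1 (by omega)
  have hAsmono : ∀ i j, i ≤ j → j ≤ l → As i ≤ As j := by
    intro i j hij hj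
    exact enum_mono hLApos hij (by omega)
  have hAsstrict : ∀ i j, i < j → j ≤ l → As i < As j := by
    intro i j hij hj
    exact enum_strictMono hLApos hij (by omega)
  have hAsbd : ∀ j, j ≤ l → As j ≤ n := by
    intro j hj
    cases Nat.eq_zero_or_pos j with
    | inl h => rw [h, hAs0]; omega
    | inr h => exact hLAbd _ (hAsmem j h hj)
  have hAssurj : ∀ a ∈ LA, ∃ j, 1 ≤ j ∧ j ≤ l ∧ As j = a := by
    intro a ha
    obtain ⟨j, h1, h2, h3⟩ := enum_surj ha
    exact ⟨j, h1, by omega, h3⟩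
  have hAspos : ∀ j, j ≤ l → (1 ≤ As j ↔ 1 ≤ j) := by
    intro j hj
    exact enum_pos_iff hLApos (by omega)
  have henbd : ∀ j, j ≤ r → enum RB' j ≤ n := by
    intro j hj
    cases Nat.eq_zero_or_pos j with
    | inl h => rw [h]; rw [enum_zero]; omega
    | inr h =>
      have hm := enum_mem h (show j ≤ RB'.card by omega)
      obtain ⟨b, hb, he⟩ := (hRB'mem _).mp hm
      have := hRBpos b hb
      omega
  have hBs0 : Bs 0 = n + 1 := rfl
  have hBsmem : ∀ j, 1 ≤ j → j ≤ r → Bs j ∈ RB := by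
    intro j h1 h2
    have hm := enum_mem h1 (show j ≤ RB'.card by omega)
    obtain ⟨b, hb, he⟩ := (hRB'mem _).mp hm
    have hbd := hRBbd b hb
    have hBj : Bs j = b := by show n + 1 - enum RB' j = b; omega
    rw [hBj]
    exact hb
  have hBsanti : ∀ i j, i < j → j ≤ r → Bs j < Bs i := by
    intro i j hij hj
    have h1 := enum_strictMono hRB'pos hij (show j ≤ RB'.card by omega)
    have h2 := henbd j hj
    show n + 1 - enum RB' j < n + 1 - enum RB' i
    omega
  have hBsmono : ∀ i j, i ≤ j → j ≤ r → Bs j ≤ Bs i := by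
    intro i j hij hj
    rcases Nat.lt_or_ge i j with h | h
    · exact (hBsanti i j h hj).le
    · have : i = j := by omega
      rw [this]
  have hBsbd : ∀ j, j ≤ r → Bs j ≤ n + 1 := by
    intro j hj
    show n + 1 - enum RB' j ≤ n + 1
    omega
  have hBspos : ∀ j, j ≤ r → 1 ≤ Bs j := by
    intro j hj
    have := henbd j hj
    show 1 ≤ n + 1 - enum RB' j
    omega
  have hBslt : ∀ j, 1 ≤ j → j ≤ r → Bs j ≤ n := by
    intro j h1 h2
    exact hRBbd _ (hBsmem j h1 h2)
  have hBssurj : ∀ b ∈ RB, ∃ j, 1 ≤ j ∧ j ≤ r ∧ Bs j = b := by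
    intro b hb
    have hbd := hRBbd b hb
    have hm : n + 1 - b ∈ RB' := by
      rw [hRB'def, Finset.mem_image]
      exact ⟨b, hb, rfl⟩
    obtain ⟨j, h1, h2, h3⟩ := enum_surj hm
    refine ⟨j, h1, by omega, ?_⟩
    show n + 1 - enum RB' j = b
    omega
  have hAltB : ∀ x y, x ≤ l → y ≤ r → As x < Bs y := by
    intro x y hx hy
    rcases Nat.eq_zero_or_pos y with hy0 | hy1
    · rw [hy0, hBs0]
      have := hAsbd x hx
      omega
    · have hB := hBsmem y hy1 hy
      have hBp := hRBpos _ hB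
      rcases Nat.eq_zero_or_pos x with hx0 | hx1
      · rw [hx0, hAs0]; omega
      · exact hABlt _ (hAsmem x hx1 hx) _ hB
  have htotw : ∀ w : XWord l r, tot w.1 = (l, r) := by
    intro w
    rw [Prod.ext_iff]
    exact ⟨w.2.1, w.2.2⟩
  have hbox : ∀ w : XWord l r, ∀ q ∈ pts w.1 (0, 0),
      q.1 ≤ l ∧ q.2 ≤ r ∧ 0 < q.1 + q.2 := by
    intro w q hq
    have := pts_mem hq
    rw [htotw w] at this
    simp only at this
    omega
  have HT : ∀ w : XWord l r, ∀ q ∈ pts w.1 (0, 0),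
      As q.1 < Bs q.2 ∧ Bs q.2 ≤ n + 1 ∧ ¬(As q.1 = 0 ∧ Bs q.2 = n + 1) := by
    intro w q hq
    obtain ⟨hq1, hq2, hq3⟩ := hbox w q hq
    refine ⟨hAltB _ _ hq1 hq2, hBsbd _ hq2, ?_⟩
    rintro ⟨e1, e2⟩
    rcases Nat.eq_zero_or_pos q.1 with h1 | h1
    · have h2 : 1 ≤ q.2 := by omega
      have := hBslt q.2 h2 hq2
      omega
    · have := (hAspos q.1 hq1).mpr h1
      omega
  set FW : XWord l r → Finset (FanBracket n) :=
    fun w => ntSet n Y ∪ trSet n As Bs (pts w.1 (0, 0)) (HT w) with hFWdef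
  have hmix : ∀ b ∈ Y.1, b.1.1 ≠ 0 → b.1.2 ≠ n + 1 → ∀ x y : ℕ, x ≤ l → y ≤ r → 0 < x + y →
      b.1.2 ≤ As x ∨ Bs y ≤ b.1.1 ∨ (As x < b.1.1 ∧ b.1.2 < Bs y) := by
    intro b hb hb1 hb2 x y hx hy hxy
    obtain ⟨hp1, hp2, hp3⟩ := b.2
    have hleft : x = 0 ∨ As x < b.1.1 ∨ b.1.2 ≤ As x := by
      rcases Nat.eq_zero_or_pos x with h | h
      · exact Or.inl h
      · obtain ⟨c, hc, hce⟩ := hLAY (As x) (hAsmem x h hx)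
        have hcp := psiCompat_elim (Y.2 b hb c hc)
        have e1 : c.1.1 = 0 := by rw [hce]
        have e2 : c.1.2 = As x := by rw [hce]
        right
        omega
    have hright : y = 0 ∨ b.1.2 < Bs y ∨ Bs y ≤ b.1.1 := by
      rcases Nat.eq_zero_or_pos y with h | h
      · exact Or.inl h
      · obtain ⟨c, hc, hce⟩ := hRBY (Bs y) (hBsmem y h hy)
        have hcp := psiCompat_elim (Y.2 b hb c hc)
        have e1 : c.1.1 = Bs y := by rw [hce]
        have e2 : c.1.2 = n + 1 := by rw [hce]
        right
        omega
    rcases hleft with rfl | hleft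
    · rcases hright with rfl | hright
      · omega
      · rw [hAs0]
        omega
    · rcases hright with rfl | hright
      · rw [hBs0]
        have := hAsbd x hx
        omega
      · omega
  have hcompatF : ∀ w : XWord l r, ∀ x ∈ FW w, ∀ y ∈ FW w, FanCompat x y := by
    intro w x hx y hy
    rcases Finset.mem_union.mp hx with hx' | hx' <;>
      rcases Finset.mem_union.mp hy with hy' | hy'
    · obtain ⟨b, hbY, hb1, hb2, hbh, rfl⟩ := mem_ntSet_iff.mp hx'
      obtain ⟨c, hcY, hc1, hc2, hch, rfl⟩ := mem_ntSet_iff.mp hy'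
      exact fanCompat_inl_inl _ _ (psiCompat_elim (Y.2 b hbY c hcY))
    · obtain ⟨b, hbY, hb1, hb2, hbh, rfl⟩ := mem_ntSet_iff.mp hx'
      obtain ⟨q, hq, hqh, rfl⟩ := mem_trSet_iff.mp hy'
      obtain ⟨h1, h2, h3⟩ := hbox w q hq
      show b.1.2 ≤ As q.1 ∨ Bs q.2 ≤ b.1.1 ∨ (As q.1 < b.1.1 ∧ b.1.2 < Bs q.2)
      exact hmix b hbY hb1 hb2 q.1 q.2 h1 h2 h3
    · obtain ⟨q, hq, hqh, rfl⟩ := mem_trSet_iff.mp hx'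
      obtain ⟨b, hbY, hb1, hb2, hbh, rfl⟩ := mem_ntSet_iff.mp hy'
      obtain ⟨h1, h2, h3⟩ := hbox w q hq
      show b.1.2 ≤ As q.1 ∨ Bs q.2 ≤ b.1.1 ∨ (As q.1 < b.1.1 ∧ b.1.2 < Bs q.2)
      exact hmix b hbY hb1 hb2 q.1 q.2 h1 h2 h3
    · obtain ⟨q, hq, hqh, rfl⟩ := mem_trSet_iff.mp hx'
      obtain ⟨q', hq', hqh', rfl⟩ := mem_trSet_iff.mp hy'
      obtain ⟨h1, h2, _⟩ := hbox w q hq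
      obtain ⟨h1', h2', _⟩ := hbox w q' hq'
      show (As q.1 ≤ As q'.1 ∧ Bs q'.2 ≤ Bs q.2) ∨ (As q'.1 ≤ As q.1 ∧ Bs q.2 ≤ Bs q'.2)
      rcases pts_chain hq hq' with hcc | hcc
      · exact Or.inl ⟨hAsmono _ _ hcc.1 h1', hBsmono _ _ hcc.2 h2'⟩
      · exact Or.inr ⟨hAsmono _ _ hcc.1 h1, hBsmono _ _ hcc.2 h2⟩
  have hq1pos : ∀ w : XWord l r, ∀ q ∈ pts w.1 (0, 0), 1 ≤ As q.1 → 1 ≤ q.1 := by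
    intro w q hq h
    exact (hAspos q.1 (hbox w q hq).1).mp h
  have hq2pos : ∀ w : XWord l r, ∀ q ∈ pts w.1 (0, 0), Bs q.2 ≤ n → 1 ≤ q.2 := by
    intro w q hq h
    rcases Nat.eq_zero_or_pos q.2 with h0 | h0
    · rw [h0, hBs0] at h; omega
    · exact h0
  have hfibF : ∀ w : XWord l r, cutSet (FW w) = Y.1 := by
    intro w
    ext b
    constructor
    · intro hb
      rw [cutSet, Finset.mem_biUnion] at hb
      obtain ⟨t, htm, hbt⟩ := hb
      rcases Finset.mem_union.mp htm with ht | ht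
      · obtain ⟨c, hcY, hc1, hc2, hch, rfl⟩ := mem_ntSet_iff.mp ht
        have he : b.1 = c.1 := mem_cutBracket_inl.mp hbt
        rw [Subtype.ext he]
        exact hcY
      · obtain ⟨q, hq, hqh, rfl⟩ := mem_trSet_iff.mp ht
        rcases mem_cutBracket_inr.mp hbt with ⟨h1, h2⟩ | ⟨h1, h2⟩
        · have hx1 := hq1pos w q hq h1
          obtain ⟨c, hcY, hce⟩ := hLAY (As q.1) (hAsmem q.1 hx1 (hbox w q hq).1)
          have : b = c := Subtype.ext (by rw [h2, hce])
          rw [this]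
          exact hcY
        · have hy1 := hq2pos w q hq h1
          obtain ⟨c, hcY, hce⟩ := hRBY (Bs q.2) (hBsmem q.2 hy1 (hbox w q hq).2.1)
          have : b = c := Subtype.ext (by rw [h2, hce])
          rw [this]
          exact hcY
    · intro hbY
      rw [cutSet, Finset.mem_biUnion]
      obtain ⟨hp1, hp2, hp3⟩ := b.2
      by_cases hb1 : b.1.1 = 0
      · have haLA := hYLA b hbY hb1
        obtain ⟨x, hx1, hx2, hAsx⟩ := hAssurj _ haLA
        obtain ⟨q, hq, hqx⟩ := pts_cover1 (w := w.1) (p := ((0, 0) : ℕ × ℕ))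
          (show ((0,0) : ℕ × ℕ).1 < x by omega)
          (by rw [htotw w]; show x ≤ 0 + l; omega)
        have h1a : 1 ≤ As q.1 := by rw [hqx, hAsx]; exact hLApos _ haLA
        have h2a : b.1 = (0, As q.1) := by
          rw [Prod.ext_iff]
          exact ⟨hb1, by rw [hqx, hAsx]⟩
        exact ⟨Sum.inr ⟨(As q.1, Bs q.2), HT w q hq⟩,
          Finset.mem_union_right _ (mem_trSet_iff.mpr ⟨q, hq, _, rfl⟩),
          mem_cutBracket_inr.mpr (Or.inl ⟨h1a, h2a⟩)⟩
      · by_cases hb2 : b.1.2 = n + 1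
        · have haRB := hYRB b hbY hb2
          obtain ⟨y, hy1, hy2, hBsy⟩ := hBssurj _ haRB
          obtain ⟨q, hq, hqy⟩ := pts_cover2 (w := w.1) (p := ((0, 0) : ℕ × ℕ))
            (show ((0,0) : ℕ × ℕ).2 < y by omega)
            (by rw [htotw w]; show y ≤ 0 + r; omega)
          have h1a : Bs q.2 ≤ n := by rw [hqy, hBsy]; exact hRBbd _ haRB
          have h2a : b.1 = (Bs q.2, n + 1) := by
            rw [Prod.ext_iff]
            exact ⟨by rw [hqy, hBsy], hb2⟩
          exact ⟨Sum.inr ⟨(As q.1, Bs q.2), HT w q hq⟩,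
            Finset.mem_union_right _ (mem_trSet_iff.mpr ⟨q, hq, _, rfl⟩),
            mem_cutBracket_inr.mpr (Or.inr ⟨h1a, h2a⟩)⟩
        · refine ⟨Sum.inl ⟨b.1, ⟨by omega, hp1, by omega⟩⟩,
            Finset.mem_union_left _ (mem_ntSet_iff.mpr ⟨b, hbY, hb1, hb2, _, rfl⟩), ?_⟩
          exact mem_cutBracket_inl.mpr rfl
  have hAsinj : ∀ x x', x ≤ l → x' ≤ l → As x = As x' → x = x' := by
    intro x x' hx hx' he
    rcases Nat.lt_trichotomy x x' with h | h | h
    · have := hAsstrict x x' h hx'; omega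
    · exact h
    · have := hAsstrict x' x h hx; omega
  have hBsinj : ∀ y y', y ≤ r → y' ≤ r → Bs y = Bs y' → y = y' := by
    intro y y' hy hy' he
    rcases Nat.lt_trichotomy y y' with h | h | h
    · have := hBsanti y y' h hy'; omega
    · exact h
    · have := hBsanti y' y h hy; omega
  have hFWsub : ∀ w w' : XWord l r, FW w ⊆ FW w' ↔ pts w.1 (0, 0) ⊆ pts w'.1 (0, 0) := by
    intro w w'
    constructor
    · intro hsub q hq
      have ht : Sum.inr (⟨(As q.1, Bs q.2), HT w q hq⟩ : FanTrunk n) ∈ FW w :=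
        Finset.mem_union_right _ (mem_trSet_iff.mpr ⟨q, hq, _, rfl⟩)
      have ht' := hsub ht
      rcases Finset.mem_union.mp ht' with h | h
      · obtain ⟨c, _, _, _, _, he⟩ := mem_ntSet_iff.mp h
        simp at he
      · obtain ⟨q', hq', hh, he⟩ := mem_trSet_iff.mp h
        have hv := congrArg Subtype.val (Sum.inr.inj he)
        have e1 : As q.1 = As q'.1 := congrArg Prod.fst hv
        have e2 : Bs q.2 = Bs q'.2 := congrArg Prod.snd hv
        have hq1 := hbox w q hq
        have hq1' := hbox w' q' hq'
        have heq : q = q' := by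
          rw [Prod.ext_iff]
          exact ⟨hAsinj _ _ hq1.1 hq1'.1 e1, hBsinj _ _ hq1.2.1 hq1'.2.1 e2⟩
        rw [heq]
        exact hq'
    · intro hsub x hx
      rcases Finset.mem_union.mp hx with h | h
      · exact Finset.mem_union_left _ h
      · obtain ⟨q, hq, hh, rfl⟩ := mem_trSet_iff.mp h
        exact Finset.mem_union_right _
          (mem_trSet_iff.mpr ⟨q, hsub hq, HT w' q (hsub hq), rfl⟩)
  have hle : ∀ w w' : XWord l r, FW w ⊆ FW w' ↔ w ≤ w' := by
    intro w w'
    rw [hFWsub]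
    constructor
    · intro h
      exact subset_rtg w'.1.length w.1 w'.1 (0, 0) le_rfl (by rw [htotw w, htotw w']) h
    · intro h
      exact rtg_pts h (0, 0)
  -- inverses of the enumerations
  set Ainv : ℕ → ℕ := fun a => (LA.filter (fun x => x ≤ a)).card with hAinvdef
  set Binv : ℕ → ℕ := fun b => (RB.filter (fun x => b ≤ x)).card with hBinvdef
  have hAinvle : ∀ a, Ainv a ≤ l := by
    intro a
    rw [← hLAcard]
    exact Finset.card_le_card (Finset.filter_subset _ _)
  have hBinvle : ∀ b, Binv b ≤ r := by
    intro b
    rw [← hRBcard]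
    exact Finset.card_le_card (Finset.filter_subset _ _)
  have hAinv0 : Ainv 0 = 0 := by
    show (LA.filter (fun x => x ≤ 0)).card = 0
    rw [Finset.card_eq_zero, Finset.filter_eq_empty_iff]
    intro a ha
    have := hLApos a ha
    omega
  have hBinvTop : Binv (n + 1) = 0 := by
    show (RB.filter (fun x => n + 1 ≤ x)).card = 0
    rw [Finset.card_eq_zero, Finset.filter_eq_empty_iff]
    intro a ha
    have := hRBbd a ha
    omega
  have hAinvmono : ∀ a a', a ≤ a' → Ainv a ≤ Ainv a' := by
    intro a a' h
    apply Finset.card_le_card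
    intro x hx
    rw [Finset.mem_filter] at hx ⊢
    exact ⟨hx.1, by omega⟩
  have hBinvanti : ∀ b b', b ≤ b' → Binv b' ≤ Binv b := by
    intro b b' h
    apply Finset.card_le_card
    intro x hx
    rw [Finset.mem_filter] at hx ⊢
    exact ⟨hx.1, by omega⟩
  have hAinvAs : ∀ x, x ≤ l → Ainv (As x) = x := by
    intro x hx
    have hinj : Set.InjOn As (Finset.Icc 1 x) := by
      intro i hi j hj he
      rw [Finset.coe_Icc, Set.mem_Icc] at hi hj
      exact hAsinj i j (by omega) (by omega) he
    have himg : LA.filter (fun a => a ≤ As x) = (Finset.Icc 1 x).image As := by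
      ext a
      constructor
      · intro hmem
        rw [Finset.mem_filter] at hmem
        obtain ⟨haLA, hle'⟩ := hmem
        obtain ⟨j, hj1, hjl, hje⟩ := hAssurj a haLA
        refine Finset.mem_image.mpr ⟨j, Finset.mem_Icc.mpr ⟨hj1, ?_⟩, hje⟩
        by_contra hc
        push_neg at hc
        have := hAsstrict x j hc hjl
        omega
      · intro hmem
        obtain ⟨j, hj, rfl⟩ := Finset.mem_image.mp hmem
        rw [Finset.mem_Icc] at hj
        exact Finset.mem_filter.mpr ⟨hAsmem j hj.1 (by omega), hAsmono j x hj.2 hx⟩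
    show (LA.filter (fun a => a ≤ As x)).card = x
    rw [himg, Finset.card_image_of_injOn hinj, Nat.card_Icc]
    omega
  have hBinvBs : ∀ y, y ≤ r → Binv (Bs y) = y := by
    intro y hy
    have hinj : Set.InjOn Bs (Finset.Icc 1 y) := by
      intro i hi j hj he
      rw [Finset.coe_Icc, Set.mem_Icc] at hi hj
      exact hBsinj i j (by omega) (by omega) he
    have himg : RB.filter (fun b => Bs y ≤ b) = (Finset.Icc 1 y).image Bs := by
      ext b
      constructor
      · intro hmem
        rw [Finset.mem_filter] at hmem
        obtain ⟨hbRB, hle'⟩ := hmem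
        obtain ⟨j, hj1, hjl, hje⟩ := hBssurj b hbRB
        refine Finset.mem_image.mpr ⟨j, Finset.mem_Icc.mpr ⟨hj1, ?_⟩, hje⟩
        by_contra hc
        push_neg at hc
        have := hBsanti y j hc hjl
        omega
      · intro hmem
        obtain ⟨j, hj, rfl⟩ := Finset.mem_image.mp hmem
        rw [Finset.mem_Icc] at hj
        exact Finset.mem_filter.mpr ⟨hBsmem j hj.1 (by omega), hBsmono j y hj.2 hy⟩
    show (RB.filter (fun b => Bs y ≤ b)).card = y
    rw [himg, Finset.card_image_of_injOn hinj, Nat.card_Icc]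
    omega
  have hAsAinv : ∀ a ∈ LA, As (Ainv a) = a := by
    intro a ha
    obtain ⟨j, hj1, hjl, rfl⟩ := hAssurj a ha
    rw [hAinvAs j hjl]
  have hBsBinv : ∀ b ∈ RB, Bs (Binv b) = b := by
    intro b hb
    obtain ⟨j, hj1, hjl, rfl⟩ := hBssurj b hb
    rw [hBinvBs j hjl]
  -- surjectivity
  have hsurjF : ∀ T : Fan n, cutFan T = Y → ∃ w : XWord l r, FW w = T.1 := by
    intro T hT
    have hTY : cutSet T.1 = Y.1 := congrArg Subtype.val hT
    have htr : ∀ p : FanTrunk n, Sum.inr p ∈ T.1 →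
        (p.1.1 = 0 ∨ p.1.1 ∈ LA) ∧ (p.1.2 = n + 1 ∨ p.1.2 ∈ RB) := by
      intro p hp
      obtain ⟨hp1, hp2, hp3⟩ := p.2
      constructor
      · rcases Nat.eq_zero_or_pos p.1.1 with h | h
        · exact Or.inl h
        · right
          have hm : (⟨(0, p.1.1), by omega⟩ : PsiBracket (n + 1)) ∈ cutSet T.1 := by
            rw [cutSet, Finset.mem_biUnion]
            exact ⟨Sum.inr p, hp, mem_cutBracket_inr.mpr (Or.inl ⟨h, rfl⟩)⟩
          rw [hTY] at hm
          exact hYLA _ hm rfl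
      · by_cases h : p.1.2 = n + 1
        · exact Or.inl h
        · right
          have h' : p.1.2 ≤ n := by omega
          have hm : (⟨(p.1.2, n + 1), by omega⟩ : PsiBracket (n + 1)) ∈ cutSet T.1 := by
            rw [cutSet, Finset.mem_biUnion]
            exact ⟨Sum.inr p, hp, mem_cutBracket_inr.mpr (Or.inr ⟨h', rfl⟩)⟩
          rw [hTY] at hm
          exact hYRB _ hm rfl
    set P : Finset (ℕ × ℕ) := (T.1.filter (fun t => t.isRight)).image
      (fun t => Sum.elim (fun _ => ((0, 0) : ℕ × ℕ))
        (fun p : FanTrunk n => (Ainv p.1.1, Binv p.1.2)) t) with hPdef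
    have hPmem : ∀ q : ℕ × ℕ, q ∈ P ↔ ∃ p : FanTrunk n, Sum.inr p ∈ T.1 ∧
        q = (Ainv p.1.1, Binv p.1.2) := by
      intro q
      rw [hPdef, Finset.mem_image]
      constructor
      · rintro ⟨t, ht, rfl⟩
        rw [Finset.mem_filter] at ht
        cases t with
        | inl b => simp at ht
        | inr p => exact ⟨p, ht.1, rfl⟩
      · rintro ⟨p, hp, rfl⟩
        exact ⟨Sum.inr p, Finset.mem_filter.mpr ⟨hp, rfl⟩, rfl⟩
    have hround : ∀ p : FanTrunk n, Sum.inr p ∈ T.1 →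
        As (Ainv p.1.1) = p.1.1 ∧ Bs (Binv p.1.2) = p.1.2 := by
      intro p hp
      obtain ⟨hc1, hc2⟩ := htr p hp
      constructor
      · rcases hc1 with h | h
        · rw [h, hAinv0, hAs0]
        · exact hAsAinv _ h
      · rcases hc2 with h | h
        · rw [h, hBinvTop, hBs0]
        · exact hBsBinv _ h
    have hPbd : ∀ q ∈ P, (0 : ℕ) ≤ q.1 ∧ (0 : ℕ) ≤ q.2 ∧ 0 + 0 < q.1 + q.2 ∧
        q.1 ≤ 0 + l ∧ q.2 ≤ 0 + r := by
      intro q hq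
      obtain ⟨p, hp, hqe⟩ := (hPmem q).mp hq
      have e1 : q.1 = Ainv p.1.1 := by rw [hqe]
      have e2 : q.2 = Binv p.1.2 := by rw [hqe]
      obtain ⟨hr1, hr2⟩ := hround p hp
      obtain ⟨hp1, hp2, hp3⟩ := p.2
      have hb1 := hAinvle p.1.1
      have hb2 := hBinvle p.1.2
      refine ⟨Nat.zero_le _, Nat.zero_le _, ?_, by omega, by omega⟩
      rcases Nat.eq_zero_or_pos (q.1 + q.2) with h0 | h0
      · exfalso
        have ha0 : Ainv p.1.1 = 0 := by omega
        have hb0 : Binv p.1.2 = 0 := by omega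
        rw [ha0, hAs0] at hr1
        rw [hb0, hBs0] at hr2
        exact hp3 ⟨hr1.symm, hr2.symm⟩
      · omega
    have hPch : ∀ q ∈ P, ∀ q' ∈ P, (q.1 ≤ q'.1 ∧ q.2 ≤ q'.2) ∨
        (q'.1 ≤ q.1 ∧ q'.2 ≤ q.2) := by
      intro q hq q' hq'
      obtain ⟨p, hp, hqe⟩ := (hPmem q).mp hq
      obtain ⟨p', hp', hqe'⟩ := (hPmem q').mp hq'
      have e1 : q.1 = Ainv p.1.1 := by rw [hqe]
      have e2 : q.2 = Binv p.1.2 := by rw [hqe]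
      have e1' : q'.1 = Ainv p'.1.1 := by rw [hqe']
      have e2' : q'.2 = Binv p'.1.2 := by rw [hqe']
      have hcomp : (p.1.1 ≤ p'.1.1 ∧ p'.1.2 ≤ p.1.2) ∨
          (p'.1.1 ≤ p.1.1 ∧ p.1.2 ≤ p'.1.2) := T.2 _ hp _ hp'
      rcases hcomp with ⟨ha, hb⟩ | ⟨ha, hb⟩
      · left
        constructor
        · rw [e1, e1']; exact hAinvmono _ _ ha
        · rw [e2, e2']; exact hBinvanti _ _ hb
      · right
        constructor
        · rw [e1, e1']; exact hAinvmono _ _ ha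
        · rw [e2, e2']; exact hBinvanti _ _ hb
    have hPc1 : ∀ x, (0 : ℕ) < x → x ≤ 0 + l → ∃ q ∈ P, q.1 = x := by
      intro x h1 h2
      have haLA : As x ∈ LA := hAsmem x h1 (by omega)
      obtain ⟨c, hcY, hce⟩ := hLAY (As x) haLA
      have hcm : c ∈ cutSet T.1 := by rw [hTY]; exact hcY
      rw [cutSet, Finset.mem_biUnion] at hcm
      obtain ⟨t, htm, hct⟩ := hcm
      have ec1 : c.1.1 = 0 := by rw [hce]
      have ec2 : c.1.2 = As x := by rw [hce]
      cases t with
      | inl b =>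
        exfalso
        have hcb := mem_cutBracket_inl.mp hct
        obtain ⟨hb1, hb2, hb3⟩ := b.2
        have : c.1.1 = b.1.1 := congrArg Prod.fst hcb
        omega
      | inr p =>
        rcases mem_cutBracket_inr.mp hct with ⟨h1', h2'⟩ | ⟨h1', h2'⟩
        · have ep : p.1.1 = As x := by
            have := congrArg Prod.snd h2'
            omega
          refine ⟨(Ainv p.1.1, Binv p.1.2), (hPmem _).mpr ⟨p, htm, rfl⟩, ?_⟩
          show Ainv p.1.1 = x
          rw [ep, hAinvAs x (by omega)]
        · exfalso
          have := congrArg Prod.snd h2'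
          have hxb := hAsbd x (by omega)
          omega
    have hPc2 : ∀ y, (0 : ℕ) < y → y ≤ 0 + r → ∃ q ∈ P, q.2 = y := by
      intro y h1 h2
      have hbRB : Bs y ∈ RB := hBsmem y h1 (by omega)
      obtain ⟨c, hcY, hce⟩ := hRBY (Bs y) hbRB
      have hcm : c ∈ cutSet T.1 := by rw [hTY]; exact hcY
      rw [cutSet, Finset.mem_biUnion] at hcm
      obtain ⟨t, htm, hct⟩ := hcm
      have ec1 : c.1.1 = Bs y := by rw [hce]
      have ec2 : c.1.2 = n + 1 := by rw [hce]
      have hby := hBslt y h1 (by omega)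
      cases t with
      | inl b =>
        exfalso
        have hcb := mem_cutBracket_inl.mp hct
        obtain ⟨hb1, hb2, hb3⟩ := b.2
        have : c.1.2 = b.1.2 := congrArg Prod.snd hcb
        omega
      | inr p =>
        rcases mem_cutBracket_inr.mp hct with ⟨h1', h2'⟩ | ⟨h1', h2'⟩
        · exfalso
          have h3 := congrArg Prod.fst h2'
          have h4 := hBspos y (by omega)
          omega
        · have ep : p.1.2 = Bs y := by
            have := congrArg Prod.fst h2'
            omega
          refine ⟨(Ainv p.1.1, Binv p.1.2), (hPmem _).mpr ⟨p, htm, rfl⟩, ?_⟩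
          show Binv p.1.2 = y
          rw [ep, hBinvBs y (by omega)]
    obtain ⟨w0, hw0t, hw0p⟩ := pathlike_exists (l + r) l r (0, 0) P le_rfl hPbd hPch hPc1 hPc2
    have hw0 : (w0.map XLetter.ca).sum = l ∧ (w0.map XLetter.cb).sum = r :=
      ⟨congrArg Prod.fst hw0t, congrArg Prod.snd hw0t⟩
    refine ⟨⟨w0, hw0⟩, ?_⟩
    apply Finset.Subset.antisymm
    · intro x hx
      rcases Finset.mem_union.mp hx with h | h
      · obtain ⟨b, hbY, hb1, hb2, hbh, rfl⟩ := mem_ntSet_iff.mp h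
        have hbm : b ∈ cutSet T.1 := by rw [hTY]; exact hbY
        rw [cutSet, Finset.mem_biUnion] at hbm
        obtain ⟨t, htm, hbt⟩ := hbm
        cases t with
        | inl c =>
          have he : b.1 = c.1 := mem_cutBracket_inl.mp hbt
          have heq : (Sum.inl (⟨b.1, hbh⟩ : FanIntl n) : FanBracket n) = Sum.inl c := by
            rw [Sum.inl.injEq]
            exact Subtype.ext he
          rw [heq]
          exact htm
        | inr p =>
          exfalso
          rcases mem_cutBracket_inr.mp hbt with ⟨h1', h2'⟩ | ⟨h1', h2'⟩
          · exact hb1 (congrArg Prod.fst h2')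
          · exact hb2 (congrArg Prod.snd h2')
      · obtain ⟨q, hq, hqh, rfl⟩ := mem_trSet_iff.mp h
        have hq' : q ∈ P := by rw [← hw0p]; exact hq
        obtain ⟨p, hp, hqe⟩ := (hPmem q).mp hq'
        have e1 : q.1 = Ainv p.1.1 := by rw [hqe]
        have e2 : q.2 = Binv p.1.2 := by rw [hqe]
        obtain ⟨hr1, hr2⟩ := hround p hp
        have f1 : As q.1 = p.1.1 := by rw [e1]; exact hr1
        have f2 : Bs q.2 = p.1.2 := by rw [e2]; exact hr2
        have heq : (Sum.inr (⟨(As q.1, Bs q.2), hqh⟩ : FanTrunk n) : FanBracket n) = Sum.inr p := by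
          rw [Sum.inr.injEq]
          apply Subtype.ext
          rw [Prod.ext_iff]
          exact ⟨f1, f2⟩
        rw [heq]
        exact hp
    · intro t ht
      cases t with
      | inl b =>
        obtain ⟨hb1, hb2, hb3⟩ := b.2
        have hm : (⟨b.1, by omega⟩ : PsiBracket (n + 1)) ∈ cutSet T.1 := by
          rw [cutSet, Finset.mem_biUnion]
          exact ⟨Sum.inl b, ht, mem_cutBracket_inl.mpr rfl⟩
        rw [hTY] at hm
        apply Finset.mem_union_left
        apply mem_ntSet_iff.mpr
        refine ⟨⟨b.1, by omega⟩, hm, by show b.1.1 ≠ 0; omega, by show b.1.2 ≠ n + 1; omega,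
          b.2, rfl⟩
      | inr p =>
        apply Finset.mem_union_right
        have hqP : ((Ainv p.1.1, Binv p.1.2) : ℕ × ℕ) ∈ P := (hPmem _).mpr ⟨p, ht, rfl⟩
        have hq : ((Ainv p.1.1, Binv p.1.2) : ℕ × ℕ) ∈ pts w0 (0, 0) := by
          rw [hw0p]; exact hqP
        apply mem_trSet_iff.mpr
        obtain ⟨hr1, hr2⟩ := hround p ht
        refine ⟨(Ainv p.1.1, Binv p.1.2), hq, HT ⟨w0, hw0⟩ _ hq, ?_⟩
        rw [Sum.inr.injEq]
        apply Subtype.ext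
        rw [Prod.ext_iff]
        constructor
        · show p.1.1 = As (Ainv p.1.1)
          rw [hr1]
        · show p.1.2 = Bs (Binv p.1.2)
          rw [hr2]
  -- assemble
  let F : XWord l r → {T : Fan n // cutFan T = Y} :=
    fun w => ⟨⟨FW w, hcompatF w⟩, Subtype.ext (hfibF w)⟩
  have hFle : ∀ w w' : XWord l r, F w ≤ F w' ↔ w ≤ w' := by
    intro w w'
    rw [← hle w w']
    exact Iff.rfl
  have hFsurj : Function.Surjective F := by
    intro T
    obtain ⟨w, hw⟩ := hsurjF T.1 T.2
    refine ⟨w, ?_⟩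
    apply Subtype.ext
    apply Subtype.ext
    exact hw
  exact ⟨(RelIso.ofSurjective (OrderEmbedding.ofMapLEIff F hFle) hFsurj).symm⟩
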